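/- arXiv:2310.02996 — 7 statements merged into one kernel-verified Lean document; each statement's English description precedes it below -/
import Mathlib

section
/- If x̲ − x₀ − ρ·Σ_{k=0}^{t−1} E[r_k] + ρ·Σ_{k=0}^{t−1} Σ_{j=1}^{N} u_{j,k} + sqrt( −ρ² · (Σ_{k=0}^{t−1} (b_k − a_k)²) · ln δ̃ ) ≤ 0, then ℙ( x_t ≤ x̲ ) ≤ δ̃. -/
open MeasureTheory ProbabilityTheory Finset

lemma hoeff_scalar {p : ℝ} (hp0 : 0 ≤ p) (hp1 : p ≤ 1) (h : ℝ) :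
    1 - p + p * Real.exp h ≤ Real.exp (p * h + h ^ 2 / 4) := by
  set D : ℝ → ℝ := fun y => 1 - p + p * Real.exp y with hDdef
  have hDpos : ∀ y, 0 < D y := by
    intro y
    rcases eq_or_lt_of_le hp0 with h0 | h0
    · simp [hDdef, ← h0]
    · have := mul_pos h0 (Real.exp_pos y)
      have : (0:ℝ) ≤ 1 - p := by linarith
      simp only [hDdef]
      nlinarith [mul_pos h0 (Real.exp_pos y)]
  have hD' : ∀ y, HasDerivAt D (p * Real.exp y) y := fun y =>
    ((Real.hasDerivAt_exp y).const_mul p).const_add (1 - p)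
  set G : ℝ → ℝ := fun y => y / 2 + p - p * Real.exp y / D y with hGdef
  set F : ℝ → ℝ := fun y => y ^ 2 / 4 + p * y - Real.log (D y) with hFdef
  have hF' : ∀ y, HasDerivAt F (G y) y := by
    intro y
    have h1 : HasDerivAt (fun y : ℝ => y ^ 2 / 4 + p * y)
        ((2 : ℕ) * y ^ 1 / 4 + p * 1) y :=
      ((hasDerivAt_pow 2 y).div_const 4).add ((hasDerivAt_id y).const_mul p)
    have h2 : HasDerivAt (fun y => Real.log (D y)) (p * Real.exp y / D y) y :=
      (hD' y).log (hDpos y).ne'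
    have := h1.sub h2
    convert this using 1
    show y / 2 + p - p * Real.exp y / D y = _
    push_cast; ring
    all_goals rfl
  have hG' : ∀ y, HasDerivAt G
      (1 / 2 - (p * Real.exp y * D y - p * Real.exp y * (p * Real.exp y)) / D y ^ 2) y := by
    intro y
    have hq : HasDerivAt (fun y => p * Real.exp y / D y)
        ((p * Real.exp y * D y - p * Real.exp y * (p * Real.exp y)) / D y ^ 2) y :=
      ((Real.hasDerivAt_exp y).const_mul p).div (hD' y) (hDpos y).ne'
    have h1 : HasDerivAt (fun y : ℝ => y / 2 + p) (1 / 2) y := by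
      simpa using ((hasDerivAt_id y).div_const 2).add_const p
    exact h1.sub hq
  have hG'nonneg : ∀ y,
      0 ≤ 1 / 2 - (p * Real.exp y * D y - p * Real.exp y * (p * Real.exp y)) / D y ^ 2 := by
    intro y
    have hD2 : 0 < D y ^ 2 := pow_pos (hDpos y) 2
    rw [sub_nonneg, div_le_iff₀ hD2]
    have hA : 0 ≤ p * Real.exp y := mul_nonneg hp0 (Real.exp_pos y).le
    have hDy : D y = 1 - p + p * Real.exp y := rfl
    nlinarith [sq_nonneg (1 - p - p * Real.exp y), sq_nonneg (D y)]
  have hGmono : Monotone G :=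
    monotone_of_deriv_nonneg (fun y => (hG' y).differentiableAt)
      (fun y => by rw [(hG' y).deriv]; exact hG'nonneg y)
  have hG0 : G 0 = 0 := by
    simp only [hGdef, hDdef]
    rw [Real.exp_zero]
    have : 1 - p + p * 1 = 1 := by ring
    rw [this]
    ring
  have hFdiff : Differentiable ℝ F := fun y => (hF' y).differentiableAt
  have hFderiv : ∀ y, deriv F y = G y := fun y => (hF' y).deriv
  have hF0 : F 0 = 0 := by
    simp [hFdef, hDdef]
  have hFnonneg : 0 ≤ F h := by
    rcases le_total 0 h with hh | hh
    · have hmono : MonotoneOn F (Set.Ici 0) :=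
        monotoneOn_of_deriv_nonneg (convex_Ici 0) hFdiff.continuous.continuousOn
          hFdiff.differentiableOn
          (fun y hy => by
            rw [hFderiv y, ← hG0]
            exact hGmono (le_of_lt (by simpa using hy)))
      have := hmono (Set.self_mem_Ici) (Set.mem_Ici.2 hh) hh
      rwa [hF0] at this
    · have hmono : AntitoneOn F (Set.Iic 0) :=
        antitoneOn_of_deriv_nonpos (convex_Iic 0) hFdiff.continuous.continuousOn
          hFdiff.differentiableOn
          (fun y hy => by
            rw [hFderiv y, ← hG0]
            exact hGmono (le_of_lt (by simpa using hy)))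
      have := hmono (Set.mem_Iic.2 hh) (Set.self_mem_Iic) hh
      rwa [hF0] at this
  have hlog : Real.log (D h) ≤ p * h + h ^ 2 / 4 := by
    have : 0 ≤ h ^ 2 / 4 + p * h - Real.log (D h) := hFnonneg
    linarith
  calc D h ≤ Real.exp (Real.log (D h)) := by rw [Real.exp_log (hDpos h)]
    _ ≤ Real.exp (p * h + h ^ 2 / 4) := Real.exp_le_exp.2 hlog

lemma integrable_exp_mul_of_bounded {Ω : Type*} [MeasurableSpace Ω] {μ : Measure Ω}
    [IsProbabilityMeasure μ] {X : Ω → ℝ} {a b : ℝ} (hX : Measurable X)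
    (hbdd : ∀ᵐ ω ∂μ, a ≤ X ω ∧ X ω ≤ b) (s : ℝ) :
    Integrable (fun ω => Real.exp (s * X ω)) μ := by
  have habs : ∀ᵐ ω ∂μ, ‖X ω‖ ≤ max |a| |b| := by
    filter_upwards [hbdd] with ω ⟨h1, h2⟩
    rw [Real.norm_eq_abs, abs_le]
    constructor
    · exact le_trans (neg_le_neg (le_max_left |a| |b|)) (le_trans (neg_abs_le a) h1)
    · exact le_trans h2 (le_trans (le_abs_self b) (le_max_right _ _))
  refine (integrable_const (Real.exp (|s| * max |a| |b|))).mono'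
    ((hX.const_mul s).exp).aestronglyMeasurable ?_
  filter_upwards [habs] with ω hω
  rw [Real.norm_eq_abs, abs_of_pos (Real.exp_pos _)]
  refine Real.exp_le_exp.2 ?_
  calc s * X ω ≤ |s * X ω| := le_abs_self _
    _ = |s| * |X ω| := abs_mul s (X ω)
    _ ≤ |s| * max |a| |b| := by
        exact mul_le_mul_of_nonneg_left (by simpa [Real.norm_eq_abs] using hω) (abs_nonneg s)

lemma hoeff_mgf {Ω : Type*} [MeasurableSpace Ω] {μ : Measure Ω} [IsProbabilityMeasure μ]
    {X : Ω → ℝ} {a b : ℝ} (hX : Measurable X) (hab : a < b)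
    (hbdd : ∀ᵐ ω ∂μ, a ≤ X ω ∧ X ω ≤ b) (s : ℝ) :
    mgf X μ s ≤ Real.exp (s * (∫ ω, X ω ∂μ) + s ^ 2 * (b - a) ^ 2 / 4) := by
  have hba : (0:ℝ) < b - a := sub_pos.2 hab
  set M : ℝ := max |a| |b| with hM
  have habs : ∀ᵐ ω ∂μ, ‖X ω‖ ≤ M := by
    filter_upwards [hbdd] with ω ⟨h1, h2⟩
    rw [Real.norm_eq_abs, abs_le]
    constructor
    · exact le_trans (neg_le_neg (le_max_left |a| |b|)) (le_trans (neg_abs_le a) h1)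
    · exact le_trans h2 (le_trans (le_abs_self b) (le_max_right _ _))
  have hXint : Integrable X μ :=
    (integrable_const M).mono' hX.aestronglyMeasurable habs
  have hEint : Integrable (fun ω => Real.exp (s * X ω)) μ := by
    refine (integrable_const (Real.exp (|s| * M))).mono'
      ((hX.const_mul s).exp).aestronglyMeasurable ?_
    filter_upwards [habs] with ω hω
    rw [Real.norm_eq_abs, abs_of_pos (Real.exp_pos _)]
    refine Real.exp_le_exp.2 ?_
    calc s * X ω ≤ |s * X ω| := le_abs_self _
      _ = |s| * |X ω| := abs_mul s (X ω)
      _ ≤ |s| * M := by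
          exact mul_le_mul_of_nonneg_left (by simpa [Real.norm_eq_abs] using hω) (abs_nonneg s)
  set m : ℝ := ∫ ω, X ω ∂μ with hm
  have ham : a ≤ m := by
    have : ∫ _ω, a ∂μ ≤ ∫ ω, X ω ∂μ :=
      integral_mono_ae (integrable_const a) hXint (by filter_upwards [hbdd] with ω h using h.1)
    simpa using this
  have hmb : m ≤ b := by
    have : ∫ ω, X ω ∂μ ≤ ∫ _ω, b ∂μ :=
      integral_mono_ae hXint (integrable_const b) (by filter_upwards [hbdd] with ω h using h.2)
    simpa using this
  set p : ℝ := (m - a) / (b - a) with hp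
  have hp0 : 0 ≤ p := div_nonneg (by linarith) hba.le
  have hp1 : p ≤ 1 := (div_le_one hba).2 (by linarith)
  -- pointwise convexity bound
  have hpt : ∀ᵐ ω ∂μ, Real.exp (s * X ω) ≤
      (b * Real.exp (s * a) - a * Real.exp (s * b)) / (b - a)
        + (Real.exp (s * b) - Real.exp (s * a)) / (b - a) * X ω := by
    filter_upwards [hbdd] with ω ⟨h1, h2⟩
    have hw1 : (0:ℝ) ≤ (b - X ω) / (b - a) := div_nonneg (by linarith) hba.le
    have hw2 : (0:ℝ) ≤ (X ω - a) / (b - a) := div_nonneg (by linarith) hba.le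
    have hw : (b - X ω) / (b - a) + (X ω - a) / (b - a) = 1 := by field_simp; ring
    have hc := convexOn_exp.2 (Set.mem_univ (s * a)) (Set.mem_univ (s * b)) hw1 hw2 hw
    have harg : ((b - X ω) / (b - a)) • (s * a) + ((X ω - a) / (b - a)) • (s * b) = s * X ω := by
      simp only [smul_eq_mul]
      field_simp
      ring
    rw [harg] at hc
    calc Real.exp (s * X ω) ≤ (b - X ω) / (b - a) * Real.exp (s * a)
          + (X ω - a) / (b - a) * Real.exp (s * b) := by simpa [smul_eq_mul] using hc
      _ = (b * Real.exp (s * a) - a * Real.exp (s * b)) / (b - a)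
          + (Real.exp (s * b) - Real.exp (s * a)) / (b - a) * X ω := by
          field_simp
          ring
  have hRint : Integrable (fun ω => (b * Real.exp (s * a) - a * Real.exp (s * b)) / (b - a)
        + (Real.exp (s * b) - Real.exp (s * a)) / (b - a) * X ω) μ :=
    (integrable_const _).add (hXint.const_mul _)
  have hstep : mgf X μ s ≤ (b * Real.exp (s * a) - a * Real.exp (s * b)) / (b - a)
      + (Real.exp (s * b) - Real.exp (s * a)) / (b - a) * m := by
    have := integral_mono_ae hEint hRint hpt
    rw [integral_add (integrable_const _) (hXint.const_mul _), integral_const,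
      integral_const_mul] at this
    simpa [mgf, hm] using this
  have hconv : (b * Real.exp (s * a) - a * Real.exp (s * b)) / (b - a)
      + (Real.exp (s * b) - Real.exp (s * a)) / (b - a) * m
      = Real.exp (s * a) * (1 - p + p * Real.exp (s * (b - a))) := by
    have he : Real.exp (s * b) = Real.exp (s * a) * Real.exp (s * (b - a)) := by
      rw [← Real.exp_add]; ring_nf
    rw [he, hp]
    field_simp
    ring
  have hkey := hoeff_scalar hp0 hp1 (s * (b - a))
  have hfin : Real.exp (s * a) * Real.exp (p * (s * (b - a)) + (s * (b - a)) ^ 2 / 4)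
      = Real.exp (s * m + s ^ 2 * (b - a) ^ 2 / 4) := by
    rw [← Real.exp_add]
    congr 1
    have hpba : p * (b - a) = m - a := by
      rw [hp]; field_simp
    linear_combination s * hpba
  calc mgf X μ s ≤ (b * Real.exp (s * a) - a * Real.exp (s * b)) / (b - a)
        + (Real.exp (s * b) - Real.exp (s * a)) / (b - a) * m := hstep
    _ = Real.exp (s * a) * (1 - p + p * Real.exp (s * (b - a))) := hconv
    _ ≤ Real.exp (s * a) * Real.exp (p * (s * (b - a)) + (s * (b - a)) ^ 2 / 4) :=
        mul_le_mul_of_nonneg_left hkey (Real.exp_pos _).le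
    _ = Real.exp (s * m + s ^ 2 * (b - a) ^ 2 / 4) := hfin

/-- Lower-tail half of Proposition 1 (with ν = 1). -/
theorem soc_lower_tail_chernoff_hoeffding
    {Ω : Type*} [MeasurableSpace Ω] (μ : Measure Ω) [IsProbabilityMeasure μ]
    (t N : ℕ) (ht : 1 ≤ t) (hN : 1 ≤ N)
    (r : ℕ → Ω → ℝ) (a b : ℕ → ℝ)
    (hmeas : ∀ k < t, Measurable (r k))
    (hindep : iIndepFun (fun k : Fin t => r k.val) μ)
    (hbdd : ∀ k < t, ∀ᵐ ω ∂μ, a k ≤ r k ω ∧ r k ω ≤ b k)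
    (hab : ∀ k < t, a k < b k)
    (u : ℕ → ℕ → ℝ) (ρ x₀ xlo δt : ℝ)
    (hρ : 0 < ρ) (hδ0 : 0 < δt) (hδ1 : δt ≤ 1)
    (x : Ω → ℝ)
    (hx : ∀ ω, x ω = x₀ + ∑ k ∈ range t, ρ * (r k ω - ∑ j ∈ range N, u j k))
    (hineq : xlo - x₀ - ρ * (∑ k ∈ range t, ∫ ω, r k ω ∂μ)
        + ρ * (∑ k ∈ range t, ∑ j ∈ range N, u j k)
        + Real.sqrt (-(ρ ^ 2) * (∑ k ∈ range t, (b k - a k) ^ 2) * Real.log δt) ≤ 0) :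
    (μ {ω | x ω ≤ xlo}).toReal ≤ δt := by
  classical
  set M : ℝ := ∑ k ∈ range t, ∫ ω, r k ω ∂μ with hM
  set U : ℝ := ∑ k ∈ range t, ∑ j ∈ range N, u j k with hU
  set V : ℝ := ρ ^ 2 * ∑ k ∈ range t, (b k - a k) ^ 2 with hV
  set ε : ℝ := xlo - x₀ + ρ * U with hε
  set E : ℝ := ρ * M - ε with hE
  have hSpos : 0 < ∑ k ∈ range t, (b k - a k) ^ 2 := by
    refine Finset.sum_pos' (fun k _ => sq_nonneg _) ⟨0, Finset.mem_range.2 ht, ?_⟩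
    have h0 := hab 0 ht
    have : (0:ℝ) < b 0 - a 0 := sub_pos.2 h0
    positivity
  have hVpos : 0 < V := by
    rw [hV]; positivity
  have hsqrt_arg : -(ρ ^ 2) * (∑ k ∈ range t, (b k - a k) ^ 2) * Real.log δt
      = V * (-Real.log δt) := by rw [hV]; ring
  have hlogδ : Real.log δt ≤ 0 := Real.log_nonpos hδ0.le hδ1
  have hsqrtE : Real.sqrt (V * (-Real.log δt)) ≤ E := by
    rw [← hsqrt_arg]
    rw [hE, hε]
    linarith [hineq]
  have hE0 : 0 ≤ E := le_trans (Real.sqrt_nonneg _) hsqrtE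
  have hEsq : V * (-Real.log δt) ≤ E ^ 2 := by
    have harg : 0 ≤ V * (-Real.log δt) := mul_nonneg hVpos.le (by linarith)
    calc V * (-Real.log δt) = Real.sqrt (V * (-Real.log δt)) ^ 2 := (Real.sq_sqrt harg).symm
      _ ≤ E ^ 2 := by
          have := Real.sqrt_nonneg (V * (-Real.log δt))
          nlinarith [hsqrtE]
  set s : ℝ := -(2 * E / V) with hs
  have hs0 : s ≤ 0 := by
    rw [hs]
    have : 0 ≤ 2 * E / V := div_nonneg (by linarith) hVpos.le
    linarith
  -- scaled variables
  set Y : Fin t → Ω → ℝ := fun k ω => ρ * r k.val ω with hY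
  have hYmeas : ∀ k : Fin t, Measurable (Y k) := fun k => (hmeas k.val k.isLt).const_mul ρ
  have hYindep : iIndepFun Y μ :=
    hindep.comp (fun _ => fun v => ρ * v) (fun _ => measurable_const_mul ρ)
  have hYbdd : ∀ k : Fin t, ∀ᵐ ω ∂μ, ρ * a k.val ≤ Y k ω ∧ Y k ω ≤ ρ * b k.val := by
    intro k
    filter_upwards [hbdd k.val k.isLt] with ω ⟨h1, h2⟩
    exact ⟨mul_le_mul_of_nonneg_left h1 hρ.le, mul_le_mul_of_nonneg_left h2 hρ.le⟩
  have hYint : ∀ k : Fin t, Integrable (fun ω => Real.exp (s * Y k ω)) μ := fun k =>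
    integrable_exp_mul_of_bounded (hYmeas k) (hYbdd k) s
  have hrint : ∀ k : Fin t, Integrable (r k.val) μ := by
    intro k
    have habs : ∀ᵐ ω ∂μ, ‖r k.val ω‖ ≤ max |a k.val| |b k.val| := by
      filter_upwards [hbdd k.val k.isLt] with ω ⟨h1, h2⟩
      rw [Real.norm_eq_abs, abs_le]
      constructor
      · exact le_trans (neg_le_neg (le_max_left _ _)) (le_trans (neg_abs_le _) h1)
      · exact le_trans h2 (le_trans (le_abs_self _) (le_max_right _ _))
    exact (integrable_const _).mono' (hmeas k.val k.isLt).aestronglyMeasurable habs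
  -- set identity
  have hset : {ω | x ω ≤ xlo} = {ω | (∑ k : Fin t, Y k) ω ≤ ε} := by
    ext ω
    have hsum : (∑ k : Fin t, Y k) ω = ∑ k ∈ range t, ρ * r k ω := by
      rw [Finset.sum_apply]
      exact Fin.sum_univ_eq_sum_range (fun k => ρ * r k ω) t
    have hid : x ω = x₀ + (∑ k : Fin t, Y k) ω - ρ * U := by
      rw [hx ω, hsum, hU, Finset.mul_sum]
      simp only [mul_sub, Finset.sum_sub_distrib]
      ring
    simp only [Set.mem_setOf_eq, hid, hε]
    constructor <;> intro <;> linarith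
  -- Chernoff + independence + Hoeffding mgf bounds
  have hint_sum : Integrable (fun ω => Real.exp (s * (∑ k : Fin t, Y k) ω)) μ :=
    hYindep.integrable_exp_mul_sum hYmeas (fun k _ => hYint k)
  have hmgf_k : ∀ k : Fin t, mgf (Y k) μ s ≤
      Real.exp (s * (ρ * ∫ ω, r k.val ω ∂μ) + s ^ 2 * (ρ ^ 2 * (b k.val - a k.val) ^ 2) / 4) := by
    intro k
    have h1 := hoeff_mgf (μ := μ) (hYmeas k)
      (mul_lt_mul_of_pos_left (hab k.val k.isLt) hρ) (hYbdd k) s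
    have h2 : ∫ ω, Y k ω ∂μ = ρ * ∫ ω, r k.val ω ∂μ := by
      rw [hY]
      exact integral_const_mul ρ _
    rw [h2] at h1
    have h3 : (ρ * b k.val - ρ * a k.val) ^ 2 = ρ ^ 2 * (b k.val - a k.val) ^ 2 := by ring
    rw [h3] at h1
    exact h1
  have hsum_exp : ∑ k : Fin t,
      (s * (ρ * ∫ ω, r k.val ω ∂μ) + s ^ 2 * (ρ ^ 2 * (b k.val - a k.val) ^ 2) / 4)
      = s * (ρ * M) + s ^ 2 * V / 4 := by
    have h1 : ∑ k ∈ range t, s * (ρ * ∫ ω, r k ω ∂μ) = s * (ρ * M) := by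
      rw [hM]
      simp only [Finset.mul_sum]
    have h2 : ∑ k ∈ range t, s ^ 2 * (ρ ^ 2 * (b k - a k) ^ 2) / 4 = s ^ 2 * V / 4 := by
      rw [hV]
      simp only [Finset.mul_sum, Finset.sum_div]
    rw [Fin.sum_univ_eq_sum_range
      (fun k => s * (ρ * ∫ ω, r k ω ∂μ) + s ^ 2 * (ρ ^ 2 * (b k - a k) ^ 2) / 4) t]
    rw [Finset.sum_add_distrib, h1, h2]
  calc (μ {ω | x ω ≤ xlo}).toReal
      = (μ {ω | (∑ k : Fin t, Y k) ω ≤ ε}).toReal := by rw [hset]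
    _ ≤ Real.exp (-s * ε) * mgf (∑ k : Fin t, Y k) μ s :=
        measure_le_le_exp_mul_mgf ε hs0 hint_sum
    _ = Real.exp (-s * ε) * ∏ k : Fin t, mgf (Y k) μ s := by
        rw [hYindep.mgf_sum hYmeas]
    _ ≤ Real.exp (-s * ε) * ∏ k : Fin t, Real.exp
          (s * (ρ * ∫ ω, r k.val ω ∂μ) + s ^ 2 * (ρ ^ 2 * (b k.val - a k.val) ^ 2) / 4) := by
        refine mul_le_mul_of_nonneg_left ?_ (Real.exp_pos _).le
        exact Finset.prod_le_prod (fun k _ => mgf_nonneg) (fun k _ => hmgf_k k)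
    _ = Real.exp (-s * ε + (s * (ρ * M) + s ^ 2 * V / 4)) := by
        rw [← Real.exp_sum, ← Real.exp_add, hsum_exp]
    _ ≤ δt := by
        have hA : -s * ε + (s * (ρ * M) + s ^ 2 * V / 4) = -(E ^ 2) / V := by
          rw [hs, hE]
          field_simp
          ring
        rw [hA]
        have hle : -(E ^ 2) / V ≤ Real.log δt := by
          rw [div_le_iff₀ hVpos]
          nlinarith [hEsq]
        calc Real.exp (-(E ^ 2) / V) ≤ Real.exp (Real.log δt) := Real.exp_le_exp.2 hle
          _ = δt := Real.exp_log hδ0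
end

section
/- If x₀ − x̄ + ρ·Σ_{k=0}^{t−1} E[r_k] − ρ·Σ_{k=0}^{t−1} Σ_{j=1}^{N} u_{j,k} + sqrt( −ρ² · (Σ_{k=0}^{t−1} (b_k − a_k)²) · ln η ) ≤ 0, then ℙ( x_t ≥ x̄ ) ≤ η. -/
section HoeffdingAux
open Real MeasureTheory ProbabilityTheory

/-- Core analytic lemma (Hoeffding's lemma for a two-point distribution). -/
lemma bernoulli_mgf_bound (p : ℝ) (hp0 : 0 ≤ p) (hp1 : p ≤ 1) (u : ℝ) :
    p * exp (-(1 - p) * u) + (1 - p) * exp (p * u) ≤ exp (u ^ 2 / 8) := by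
  set q : ℝ := 1 - p with hq
  have hq0 : 0 ≤ q := by simp [hq]; linarith
  set f : ℝ → ℝ := fun v => p * exp (-q * v) + q * exp (p * v) with hfdef
  have hfpos : ∀ v, 0 < f v := by
    intro v
    rcases eq_or_lt_of_le hp0 with h | h
    · have hq1 : q = 1 := by rw [hq, ← h]; ring
      simp [hfdef, ← h, hq1]
    · have h1 := exp_pos (-q * v)
      have h2 := (exp_pos (p * v)).le
      have := mul_pos h h1
      have := mul_nonneg hq0 h2
      positivity
  set f' : ℝ → ℝ := fun v => p * q * (exp (p * v) - exp (-q * v)) with hf'def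
  set f'' : ℝ → ℝ := fun v => p * q * (p * exp (p * v) + q * exp (-q * v)) with hf''def
  have hE1 : ∀ v, HasDerivAt (fun w => exp (-q * w)) (-q * exp (-q * v)) v := by
    intro v
    have := ((hasDerivAt_id v).const_mul (-q)).exp
    simpa [mul_comm] using this
  have hE2 : ∀ v, HasDerivAt (fun w => exp (p * w)) (p * exp (p * v)) v := by
    intro v
    have := ((hasDerivAt_id v).const_mul p).exp
    simpa [mul_comm] using this
  have hdf : ∀ v, HasDerivAt f (f' v) v := by
    intro v
    have := ((hE1 v).const_mul p).add ((hE2 v).const_mul q)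
    refine this.congr_deriv ?_
    simp [hf'def]; ring
  have hdf' : ∀ v, HasDerivAt f' (f'' v) v := by
    intro v
    have := (((hE2 v).sub (hE1 v)).const_mul (p * q))
    refine this.congr_deriv ?_
    simp only [hf''def]
    ring
  -- G = derivative of F, F v = v^2/8 - log (f v)
  set G : ℝ → ℝ := fun v => v / 4 - f' v / f v with hGdef
  have hdG : ∀ v, HasDerivAt G (1 / 4 - (f'' v * f v - f' v * f' v) / (f v) ^ 2) v := by
    intro v
    have h1 : HasDerivAt (fun w : ℝ => w / 4) (1 / 4) v := by
      simpa using (hasDerivAt_id v).div_const 4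
    exact h1.sub (((hdf' v).div (hdf v) (hfpos v).ne'))
  have hGderiv_nonneg : ∀ v, 0 ≤ 1 / 4 - (f'' v * f v - f' v * f' v) / (f v) ^ 2 := by
    intro v
    rw [sub_nonneg, div_le_iff₀ (pow_pos (hfpos v) 2)]
    simp only [hf'def, hf''def, hfdef, hq]
    nlinarith [sq_nonneg (p * exp (-(1 - p) * v) - (1 - p) * exp (p * v))]
  have hGmono : Monotone G := by
    have hdiff : Differentiable ℝ G := fun v => (hdG v).differentiableAt
    refine monotone_of_deriv_nonneg hdiff ?_
    intro v
    rw [(hdG v).deriv]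
    exact hGderiv_nonneg v
  have hG0 : G 0 = 0 := by
    simp [hGdef, hf'def, hfdef]
  set F : ℝ → ℝ := fun v => v ^ 2 / 8 - Real.log (f v) with hFdef
  have hdF : ∀ v, HasDerivAt F (G v) v := by
    intro v
    have h1 : HasDerivAt (fun w : ℝ => w ^ 2 / 8) (v / 4) v := by
      have := (hasDerivAt_pow 2 v).div_const 8
      refine this.congr_deriv ?_
      norm_num; ring
    have h2 : HasDerivAt (fun w => Real.log (f w)) (f' v / f v) v :=
      (hdf v).log (hfpos v).ne'
    exact h1.sub h2
  have hF0 : F 0 = 0 := by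
    have : f 0 = 1 := by simp [hfdef, hq]
    simp [hFdef, this]
  have hFnonneg : ∀ v, 0 ≤ F v := by
    have hFdiff : Differentiable ℝ F := fun v => (hdF v).differentiableAt
    intro v
    rcases le_total 0 v with hv | hv
    · have hmono : MonotoneOn F (Set.Ici 0) := by
        refine monotoneOn_of_deriv_nonneg (convex_Ici 0) hFdiff.continuous.continuousOn
          hFdiff.differentiableOn ?_
        intro w hw
        rw [(hdF w).deriv]
        have : (0:ℝ) ≤ w := le_of_lt (by simpa using hw)
        calc (0:ℝ) = G 0 := hG0.symm
          _ ≤ G w := hGmono this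
      have := hmono (Set.self_mem_Ici) (by exact hv) hv
      rwa [hF0] at this
    · have hanti : AntitoneOn F (Set.Iic 0) := by
        refine antitoneOn_of_deriv_nonpos (convex_Iic 0) hFdiff.continuous.continuousOn
          hFdiff.differentiableOn ?_
        intro w hw
        rw [(hdF w).deriv]
        have : w ≤ (0:ℝ) := le_of_lt (by simpa using hw)
        calc G w ≤ G 0 := hGmono this
          _ = 0 := hG0
      have := hanti (by exact hv) (Set.self_mem_Iic) hv
      rwa [hF0] at this
  have hlog : Real.log (f u) ≤ u ^ 2 / 8 := by
    have := hFnonneg u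
    simp only [hFdef] at this
    linarith
  have := (Real.log_le_iff_le_exp (hfpos u)).mp hlog
  simpa [hfdef, hq] using this

/-- Hoeffding's lemma: mgf bound for a bounded random variable. -/
lemma mgf_le_hoeffding {Ω : Type*} [MeasurableSpace Ω] (μ : Measure Ω) [IsProbabilityMeasure μ]
    {X : Ω → ℝ} (hX : Measurable X) {a b : ℝ} (hab : a < b)
    (hbd : ∀ᵐ ω ∂μ, a ≤ X ω ∧ X ω ≤ b) (s : ℝ) :
    mgf X μ s ≤ exp (s * (∫ ω, X ω ∂μ) + s ^ 2 * (b - a) ^ 2 / 8) := by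
  have hd : (0:ℝ) < b - a := by linarith
  have hXint : Integrable X μ := by
    refine Integrable.mono' (integrable_const (max |a| |b|)) hX.aestronglyMeasurable ?_
    filter_upwards [hbd] with ω hω
    exact abs_le_max_abs_abs hω.1 hω.2
  set m : ℝ := ∫ ω, X ω ∂μ with hm
  have ham : a ≤ m := by
    have : ∫ _ω, a ∂μ ≤ ∫ ω, X ω ∂μ :=
      integral_mono_ae (integrable_const a) hXint (by filter_upwards [hbd] with ω hω using hω.1)
    simpa using this
  have hmb : m ≤ b := by
    have : ∫ ω, X ω ∂μ ≤ ∫ _ω, b ∂μ :=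
      integral_mono_ae hXint (integrable_const b) (by filter_upwards [hbd] with ω hω using hω.2)
    simpa using this
  set c1 : ℝ := (b * exp (s * a) - a * exp (s * b)) / (b - a) with hc1
  set c2 : ℝ := (exp (s * b) - exp (s * a)) / (b - a) with hc2
  -- chord bound
  have hchord : ∀ᵐ ω ∂μ, exp (s * X ω) ≤ c1 + c2 * X ω := by
    filter_upwards [hbd] with ω hω
    set θ : ℝ := (b - X ω) / (b - a) with hθ
    have hθ0 : 0 ≤ θ := by apply div_nonneg <;> linarith [hω.2]
    have hθ1 : 0 ≤ 1 - θ := by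
      rw [hθ, sub_nonneg, div_le_one hd]; linarith [hω.1]
    have hcvx := convexOn_exp.2 (Set.mem_univ (s * a)) (Set.mem_univ (s * b)) hθ0 hθ1
      (by ring)
    have harg : θ • (s * a) + (1 - θ) • (s * b) = s * X ω := by
      simp only [smul_eq_mul, hθ]
      field_simp
      ring
    rw [harg] at hcvx
    refine hcvx.trans (le_of_eq ?_)
    simp only [smul_eq_mul, hθ, hc1, hc2]
    field_simp
    ring
  have hexp_int : Integrable (fun ω => exp (s * X ω)) μ := by
    refine Integrable.mono' (integrable_const (exp (|s| * max |a| |b|)))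
      ((hX.const_mul s).exp).aestronglyMeasurable ?_
    filter_upwards [hbd] with ω hω
    rw [norm_of_nonneg (exp_pos _).le, exp_le_exp]
    calc s * X ω ≤ |s * X ω| := le_abs_self _
      _ = |s| * |X ω| := abs_mul _ _
      _ ≤ |s| * max |a| |b| := by
          exact mul_le_mul_of_nonneg_left (abs_le_max_abs_abs hω.1 hω.2) (abs_nonneg s)
  have hlin_int : Integrable (fun ω => c1 + c2 * X ω) μ :=
    (integrable_const c1).add (hXint.const_mul c2)
  have hstep1 : mgf X μ s ≤ c1 + c2 * m := by
    have h := integral_mono_ae hexp_int hlin_int hchord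
    rw [mgf]
    refine h.trans (le_of_eq ?_)
    rw [integral_add (integrable_const c1) (hXint.const_mul c2), integral_const,
      integral_const_mul]
    simp [hm]
  set p : ℝ := (b - m) / (b - a) with hp
  have hp0 : 0 ≤ p := by apply div_nonneg <;> linarith
  have hp1 : p ≤ 1 := by rw [hp, div_le_one hd]; linarith
  have hstep2 : c1 + c2 * m = exp (s * m) * (p * exp (-(1 - p) * (s * (b - a)))
      + (1 - p) * exp (p * (s * (b - a)))) := by
    have e1 : -(1 - p) * (s * (b - a)) = s * a - s * m := by
      rw [hp]; field_simp; ring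
    have e2 : p * (s * (b - a)) = s * b - s * m := by
      rw [hp]; field_simp
    rw [e1, e2, mul_add, ← mul_assoc, ← mul_assoc, mul_comm (exp (s*m)) p,
      mul_comm (exp (s*m)) (1-p), mul_assoc, mul_assoc, ← exp_add, ← exp_add]
    have e3 : s * m + (s * a - s * m) = s * a := by ring
    have e4 : s * m + (s * b - s * m) = s * b := by ring
    rw [e3, e4, hc1, hc2, hp]
    field_simp
    ring
  have hstep3 := bernoulli_mgf_bound p hp0 hp1 (s * (b - a))
  calc mgf X μ s ≤ c1 + c2 * m := hstep1
    _ = exp (s * m) * (p * exp (-(1 - p) * (s * (b - a)))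
        + (1 - p) * exp (p * (s * (b - a)))) := hstep2
    _ ≤ exp (s * m) * exp ((s * (b - a)) ^ 2 / 8) :=
        mul_le_mul_of_nonneg_left hstep3 (exp_pos _).le
    _ = exp (s * m + s ^ 2 * (b - a) ^ 2 / 8) := by
        rw [← exp_add]; ring_nf

end HoeffdingAux

open MeasureTheory ProbabilityTheory Finset

/-- Upper-tail half of Proposition 1 (with ν = 1): the deterministic inequality
implies the upper tail bound `ℙ(x_t ≥ x̄) ≤ η` for the state of charge
`x_t = x₀ + Σ_{k<t} ρ (r_k − Σ_{j<N} u_{j,k})`. -/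
theorem soc_upper_tail_chernoff_hoeffding
    {Ω : Type*} [MeasurableSpace Ω] (μ : Measure Ω) [IsProbabilityMeasure μ]
    (t N : ℕ) (ht : 1 ≤ t) (hN : 1 ≤ N)
    (r : ℕ → Ω → ℝ) (a b : ℕ → ℝ)
    (hmeas : ∀ k < t, Measurable (r k))
    (hindep : iIndepFun (fun k : Fin t => r k.val) μ)
    (hbdd : ∀ k < t, ∀ᵐ ω ∂μ, a k ≤ r k ω ∧ r k ω ≤ b k)
    (hab : ∀ k < t, a k < b k)
    (u : ℕ → ℕ → ℝ) (ρ x₀ xhi η : ℝ)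
    (hρ : 0 < ρ) (hη0 : 0 < η) (hη1 : η ≤ 1)
    (x : Ω → ℝ)
    (hx : ∀ ω, x ω = x₀ + ∑ k ∈ range t, ρ * (r k ω - ∑ j ∈ range N, u j k))
    (hineq : x₀ - xhi + ρ * (∑ k ∈ range t, ∫ ω, r k ω ∂μ)
        - ρ * (∑ k ∈ range t, ∑ j ∈ range N, u j k)
        + Real.sqrt (-(ρ ^ 2) * (∑ k ∈ range t, (b k - a k) ^ 2) * Real.log η) ≤ 0) :
    (μ {ω | xhi ≤ x ω}).toReal ≤ η := by
  set U : ℝ := ∑ k ∈ range t, ∑ j ∈ range N, u j k with hU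
  set M : ℝ := ∑ k ∈ range t, ∫ ω, r k ω ∂μ with hM
  set S' : ℝ := ∑ k ∈ range t, (b k - a k) ^ 2 with hS'
  have hS'pos : 0 < S' := by
    refine Finset.sum_pos (fun k hk => ?_) (nonempty_range_iff.mpr (by omega))
    exact pow_pos (sub_pos.mpr (hab k (mem_range.mp hk))) 2
  have hlogη : Real.log η ≤ 0 := Real.log_nonpos hη0.le hη1
  have harg : 0 ≤ -(ρ ^ 2) * S' * Real.log η := by
    have h := mul_nonneg (mul_nonneg (sq_nonneg ρ) hS'pos.le) (neg_nonneg.mpr hlogη)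
    nlinarith [h]
  set τ : ℝ := (xhi - x₀ + ρ * U) / ρ with hτ
  set ε : ℝ := τ - M with hε
  have hρτ : ρ * τ = xhi - x₀ + ρ * U := by
    rw [hτ]; field_simp
  have hsqrt_le : Real.sqrt (-(ρ ^ 2) * S' * Real.log η) ≤ ρ * ε := by
    have : ρ * ε = ρ * τ - ρ * M := by rw [hε]; ring
    rw [this, hρτ]; linarith
  have hε0 : 0 ≤ ε := by
    have h0 := (Real.sqrt_nonneg (-(ρ ^ 2) * S' * Real.log η)).trans hsqrt_le
    nlinarith
  have hε2 : S' * (-Real.log η) ≤ ε ^ 2 := by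
    have h1 : -(ρ ^ 2) * S' * Real.log η ≤ (ρ * ε) ^ 2 := by
      have := mul_self_le_mul_self (Real.sqrt_nonneg _) hsqrt_le
      rwa [Real.mul_self_sqrt harg, ← pow_two] at this
    nlinarith [sq_nonneg ρ, mul_pos hρ hρ]
  -- the sum process
  set T : Ω → ℝ := fun ω => ∑ k ∈ range t, r k ω with hT
  have hset : {ω | xhi ≤ x ω} = {ω | τ ≤ T ω} := by
    ext ω
    have hxω : x ω = x₀ + ρ * T ω - ρ * U := by
      rw [hx ω, hT, hU, Finset.mul_sum, Finset.mul_sum, add_sub_assoc,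
        ← Finset.sum_sub_distrib]
      congr 1
      exact Finset.sum_congr rfl (fun k _ => by ring)
    simp only [Set.mem_setOf_eq, hxω]
    rw [hτ, div_le_iff₀ hρ]
    constructor <;> intro h <;> nlinarith
  set lam : ℝ := 4 * ε / S' with hlam
  have hlam0 : 0 ≤ lam := by positivity
  have hTmeas : Measurable T := by
    apply Finset.measurable_sum
    exact fun k hk => hmeas k (mem_range.mp hk)
  have hbdd_all : ∀ᵐ ω ∂μ, ∀ k ∈ range t, a k ≤ r k ω ∧ r k ω ≤ b k := by
    exact (Filter.eventually_all_finset _).mpr fun k hk => hbdd k (mem_range.mp hk)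
  have hint : ∀ s : ℝ, ∀ k < t, Integrable (fun ω => Real.exp (s * r k ω)) μ := by
    intro s k hk
    refine Integrable.mono' (integrable_const (Real.exp (|s| * max |a k| |b k|)))
      (((hmeas k hk).const_mul s).exp).aestronglyMeasurable ?_
    filter_upwards [hbdd k hk] with ω hω
    rw [Real.norm_of_nonneg (Real.exp_pos _).le, Real.exp_le_exp]
    calc s * r k ω ≤ |s * r k ω| := le_abs_self _
      _ = |s| * |r k ω| := abs_mul _ _
      _ ≤ |s| * max |a k| |b k| :=
          mul_le_mul_of_nonneg_left (abs_le_max_abs_abs hω.1 hω.2) (abs_nonneg s)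
  have hTsum : T = ∑ k : Fin t, (fun ω => r k.val ω) := by
    funext ω
    rw [hT]
    simp only [Finset.sum_apply]
    exact (Fin.sum_univ_eq_sum_range (fun k => r k ω) t).symm
  have hTint : Integrable (fun ω => Real.exp (lam * T ω)) μ := by
    have h := hindep.integrable_exp_mul_sum (fun i => hmeas i.val i.isLt)
      (s := Finset.univ) (fun i _ => hint lam i.val i.isLt)
    have heq : (fun ω => Real.exp (lam * T ω))
        = fun ω => Real.exp (lam * (∑ i : Fin t, (fun ω' => r i.val ω')) ω) := by
      funext ω
      rw [hTsum]
    rw [heq]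
    exact h
  have hchernoff := measure_ge_le_exp_mul_mgf (μ := μ) (X := T) τ hlam0 hTint
  have hmgf_sum : mgf T μ lam = ∏ k : Fin t, mgf (fun ω => r k.val ω) μ lam := by
    rw [hTsum]
    exact hindep.mgf_sum (fun i => hmeas i.val i.isLt) Finset.univ
  have hmgf_le : mgf T μ lam ≤ Real.exp (lam * M + lam ^ 2 * S' / 8) := by
    rw [hmgf_sum]
    have hbd : ∀ k : Fin t, mgf (fun ω => r k.val ω) μ lam ≤
        Real.exp (lam * (∫ ω, r k.val ω ∂μ) + lam ^ 2 * (b k.val - a k.val) ^ 2 / 8) :=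
      fun k => mgf_le_hoeffding μ (hmeas k.val k.isLt) (hab k.val k.isLt)
        (hbdd k.val k.isLt) lam
    calc ∏ k : Fin t, mgf (fun ω => r k.val ω) μ lam
        ≤ ∏ k : Fin t, Real.exp (lam * (∫ ω, r k.val ω ∂μ)
            + lam ^ 2 * (b k.val - a k.val) ^ 2 / 8) :=
          Finset.prod_le_prod (fun k _ => mgf_nonneg) (fun k _ => hbd k)
      _ = Real.exp (∑ k : Fin t, (lam * (∫ ω, r k.val ω ∂μ)
            + lam ^ 2 * (b k.val - a k.val) ^ 2 / 8)) := by
          rw [Real.exp_sum]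
      _ = Real.exp (lam * M + lam ^ 2 * S' / 8) := by
          congr 1
          rw [Finset.sum_add_distrib, ← Finset.mul_sum, hM, hS']
          rw [Fin.sum_univ_eq_sum_range (fun k => ∫ ω, r k ω ∂μ) t]
          congr 1
          rw [← Finset.sum_div, ← Finset.mul_sum,
            Fin.sum_univ_eq_sum_range (fun k => (b k - a k) ^ 2) t]
  have hfinal : Real.exp (-lam * τ) * mgf T μ lam ≤ η := by
    calc Real.exp (-lam * τ) * mgf T μ lam
        ≤ Real.exp (-lam * τ) * Real.exp (lam * M + lam ^ 2 * S' / 8) :=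
          mul_le_mul_of_nonneg_left hmgf_le (Real.exp_pos _).le
      _ = Real.exp (-lam * τ + (lam * M + lam ^ 2 * S' / 8)) := (Real.exp_add _ _).symm
      _ ≤ Real.exp (Real.log η) := by
          rw [Real.exp_le_exp]
          have hexpeq : -lam * τ + (lam * M + lam ^ 2 * S' / 8) = -2 * ε ^ 2 / S' := by
            rw [hlam, hε]
            field_simp
            ring
          rw [hexpeq, div_le_iff₀ hS'pos]
          nlinarith [mul_nonpos_of_nonneg_of_nonpos hS'pos.le hlogη]
      _ = η := Real.exp_log hη0
  rw [hset]
  exact hchernoff.trans hfinal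
end

section
/- Suppose both of the following deterministic inequalities hold: (i) x̲ − x₀ − ρ·Σ_{k=0}^{t−1} E[r_k] + ρ·Σ_{k=0}^{t−1} Σ_{j=1}^{N} u_{j,k} + sqrt( −ρ² · (Σ_{k=0}^{t−1} (b_k − a_k)²) · ln δ̃ ) ≤ 0, and (ii) x₀ − x̄ + ρ·Σ_{k=0}^{t−1} E[r_k] − ρ·Σ_{k=0}^{t−1} Σ_{j=1}^{N} u_{j,k} + sqrt( −ρ² · (Σ_{k=0}^{t−1} (b_k − a_k)²) · ln (δ − δ̃) ) ≤ 0. Then the chance constraint ℙ( x̲ ≤ x_t ≤ x̄ ) ≥ 1 − δ holds. -/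
open MeasureTheory ProbabilityTheory Finset

section HoeffdingAux

open Real

private lemma soc_hoeffding_core {p : ℝ} (hp0 : 0 ≤ p) (hp1 : p ≤ 1) (h : ℝ) :
    1 - p + p * exp h ≤ exp (p * h + h ^ 2 / 8) := by
  have hg : ∀ y : ℝ, 0 < 1 - p + p * exp y := by
    intro y
    rcases eq_or_lt_of_le hp0 with h0 | h0
    · simp [← h0]
    · have := exp_pos y
      nlinarith
  set L : ℝ → ℝ := fun y => Real.log (1 - p + p * exp y) - p * y with hL
  set D : ℝ → ℝ := fun y => p * exp y / (1 - p + p * exp y) - p with hD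
  have hLD : ∀ y, HasDerivAt L (D y) y := by
    intro y
    have h1 : HasDerivAt (fun y : ℝ => 1 - p + p * exp y) (p * exp y) y := by
      simpa using ((Real.hasDerivAt_exp y).const_mul p).const_add (1 - p)
    have h2 : HasDerivAt (fun y : ℝ => Real.log (1 - p + p * exp y))
        (p * exp y / (1 - p + p * exp y)) y := h1.log (hg y).ne'
    simpa [hL, hD, Pi.sub_def] using h2.sub ((hasDerivAt_id y).const_mul p)
  have hDD : ∀ y, HasDerivAt D (p * (1 - p) * exp y / (1 - p + p * exp y) ^ 2) y := by
    intro y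
    have h1 : HasDerivAt (fun y : ℝ => 1 - p + p * exp y) (p * exp y) y := by
      simpa using ((Real.hasDerivAt_exp y).const_mul p).const_add (1 - p)
    have h2 : HasDerivAt (fun y : ℝ => p * exp y) (p * exp y) y :=
      (Real.hasDerivAt_exp y).const_mul p
    have h3 := h2.div h1 (hg y).ne'
    have heq : (p * exp y * (1 - p + p * exp y) - p * exp y * (p * exp y)) /
        (1 - p + p * exp y) ^ 2 = p * (1 - p) * exp y / (1 - p + p * exp y) ^ 2 := by
      ring
    rw [heq] at h3
    simpa [hD] using h3.sub_const p
  set ψ : ℝ → ℝ := fun y => y / 4 - D y with hψ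
  have hψd : ∀ y, HasDerivAt ψ (1 / 4 - p * (1 - p) * exp y / (1 - p + p * exp y) ^ 2) y := by
    intro y
    simpa [hψ, Pi.sub_def] using ((hasDerivAt_id y).div_const 4).sub (hDD y)
  have hψd_nonneg : ∀ y, 0 ≤ 1 / 4 - p * (1 - p) * exp y / (1 - p + p * exp y) ^ 2 := by
    intro y
    rw [sub_nonneg, div_le_iff₀ (pow_pos (hg y) 2)]
    nlinarith [sq_nonneg (1 - p - p * exp y), exp_pos y]
  have hψmono : Monotone ψ := by
    refine monotone_of_deriv_nonneg (fun y => (hψd y).differentiableAt) (fun y => ?_)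
    rw [(hψd y).deriv]
    exact hψd_nonneg y
  have hψ0 : ψ 0 = 0 := by simp [hψ, hD]
  set φ : ℝ → ℝ := fun y => y ^ 2 / 8 - L y with hφ
  have hφd : ∀ y, HasDerivAt φ (ψ y) y := by
    intro y
    have h1 : HasDerivAt (fun y : ℝ => y ^ 2 / 8) (y / 4) y := by
      have := (hasDerivAt_pow 2 y).div_const 8
      simpa using this.congr_deriv (by ring)
    simpa [hψ, hφ, Pi.sub_def] using h1.sub (hLD y)
  have hφ0 : φ 0 = 0 := by simp [hφ, hL]
  have key : ∀ y : ℝ, 0 ≤ φ y := by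
    intro y
    rcases le_or_gt 0 y with hy | hy
    · have hmono : MonotoneOn φ (Set.Ici (0:ℝ)) := by
        refine monotoneOn_of_deriv_nonneg (convex_Ici 0)
          (Continuous.continuousOn (by
            exact continuous_iff_continuousAt.2 fun z => (hφd z).differentiableAt.continuousAt))
          (fun z _ => (hφd z).differentiableAt.differentiableWithinAt)
          (fun z hz => ?_)
        rw [(hφd z).deriv]
        have : (0:ℝ) ≤ z := le_of_lt (by simpa using hz)
        calc (0:ℝ) = ψ 0 := hψ0.symm
          _ ≤ ψ z := hψmono this
      have := hmono (Set.self_mem_Ici) (by exact hy) hy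
      simpa [hφ0] using this
    · have hmono : AntitoneOn φ (Set.Iic (0:ℝ)) := by
        refine antitoneOn_of_deriv_nonpos (convex_Iic 0)
          (Continuous.continuousOn (by
            exact continuous_iff_continuousAt.2 fun z => (hφd z).differentiableAt.continuousAt))
          (fun z _ => (hφd z).differentiableAt.differentiableWithinAt)
          (fun z hz => ?_)
        rw [(hφd z).deriv]
        have hz0 : z ≤ 0 := le_of_lt (by simpa using hz)
        calc ψ z ≤ ψ 0 := hψmono hz0
          _ = 0 := hψ0
      have := hmono (Set.mem_Iic.2 hy.le) (Set.self_mem_Iic) hy.le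
      simpa [hφ0] using this
  have hLy : L h ≤ h ^ 2 / 8 := by have := key h; simp [hφ] at this; linarith
  have : Real.log (1 - p + p * exp h) ≤ p * h + h ^ 2 / 8 := by
    simp only [hL] at hLy; linarith
  calc 1 - p + p * exp h = exp (Real.log (1 - p + p * exp h)) := (exp_log (hg h)).symm
    _ ≤ exp (p * h + h ^ 2 / 8) := exp_le_exp.2 this

private lemma soc_integrable_of_bdd {Ω : Type*} [MeasurableSpace Ω] {μ : Measure Ω}
    [IsProbabilityMeasure μ] {X : Ω → ℝ} (hX : Measurable X) {A B : ℝ}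
    (hbdd : ∀ᵐ ω ∂μ, A ≤ X ω ∧ X ω ≤ B) : Integrable X μ := by
  refine (integrable_const (max |A| |B|)).mono' hX.aestronglyMeasurable ?_
  filter_upwards [hbdd] with ω ⟨h1, h2⟩
  rw [Real.norm_eq_abs, abs_le]
  constructor
  · calc -(max |A| |B|) ≤ -|A| := by simp
      _ ≤ A := neg_abs_le A
      _ ≤ X ω := h1
  · calc X ω ≤ B := h2
      _ ≤ |B| := le_abs_self B
      _ ≤ max |A| |B| := le_max_right _ _

private lemma soc_integrable_exp_mul_of_bdd {Ω : Type*} [MeasurableSpace Ω] (μ : Measure Ω)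
    [IsProbabilityMeasure μ] {X : Ω → ℝ} (hX : Measurable X) {A B : ℝ}
    (hbdd : ∀ᵐ ω ∂μ, A ≤ X ω ∧ X ω ≤ B) (l : ℝ) :
    Integrable (fun ω => exp (l * X ω)) μ := by
  refine (integrable_const (max (exp (l * A)) (exp (l * B)))).mono'
    ((hX.const_mul l).exp).aestronglyMeasurable ?_
  filter_upwards [hbdd] with ω ⟨h1, h2⟩
  rw [Real.norm_eq_abs, abs_of_pos (exp_pos _)]
  rcases le_or_gt 0 l with hl | hl
  · exact le_max_of_le_right (exp_le_exp.2 (by nlinarith))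
  · exact le_max_of_le_left (exp_le_exp.2 (by nlinarith))

/-- **Hoeffding's lemma**. -/
private lemma soc_hoeffding_mgf {Ω : Type*} [MeasurableSpace Ω] (μ : Measure Ω)
    [IsProbabilityMeasure μ] {X : Ω → ℝ} (hX : Measurable X) {A B : ℝ} (hAB : A < B)
    (hbdd : ∀ᵐ ω ∂μ, A ≤ X ω ∧ X ω ≤ B) (l : ℝ) :
    ∫ ω, exp (l * X ω) ∂μ ≤ exp (l * (∫ ω, X ω ∂μ) + l ^ 2 * (B - A) ^ 2 / 8) := by
  have hc : (0:ℝ) < B - A := sub_pos.2 hAB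
  have hXint : Integrable X μ := soc_integrable_of_bdd hX hbdd
  have hexpint : Integrable (fun ω => exp (l * X ω)) μ :=
    soc_integrable_exp_mul_of_bdd μ hX hbdd l
  have hpt : ∀ᵐ ω ∂μ, exp (l * X ω) ≤
      ((B - X ω) * exp (l * A) + (X ω - A) * exp (l * B)) / (B - A) := by
    filter_upwards [hbdd] with ω ⟨h1, h2⟩
    have hθ0 : 0 ≤ (B - X ω) / (B - A) := div_nonneg (by linarith) hc.le
    have hθ1 : 0 ≤ (X ω - A) / (B - A) := div_nonneg (by linarith) hc.le
    have hθs : (B - X ω) / (B - A) + (X ω - A) / (B - A) = 1 := by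
      field_simp
      ring
    have hconv := convexOn_exp.2 (Set.mem_univ (l * A)) (Set.mem_univ (l * B)) hθ0 hθ1 hθs
    simp only [smul_eq_mul] at hconv
    have harg : (B - X ω) / (B - A) * (l * A) + (X ω - A) / (B - A) * (l * B) = l * X ω := by
      rw [div_mul_eq_mul_div, div_mul_eq_mul_div, ← add_div, div_eq_iff hc.ne']
      ring
    rw [harg] at hconv
    calc exp (l * X ω) ≤ (B - X ω) / (B - A) * exp (l * A) + (X ω - A) / (B - A) * exp (l * B) :=
          hconv
      _ = ((B - X ω) * exp (l * A) + (X ω - A) * exp (l * B)) / (B - A) := by ring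
  set m := ∫ ω, X ω ∂μ with hm
  have hrhs_int : Integrable (fun ω =>
      ((B - X ω) * exp (l * A) + (X ω - A) * exp (l * B)) / (B - A)) μ := by
    apply Integrable.div_const
    exact (((integrable_const B).sub hXint).mul_const _).add
      ((hXint.sub (integrable_const A)).mul_const _)
  have hint_le := integral_mono_ae hexpint hrhs_int hpt
  have hrhs_eq : ∫ ω, ((B - X ω) * exp (l * A) + (X ω - A) * exp (l * B)) / (B - A) ∂μ
      = ((B - m) * exp (l * A) + (m - A) * exp (l * B)) / (B - A) := by
    have I1 : Integrable (fun ω => (B - X ω) * exp (l * A)) μ :=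
      ((integrable_const B).sub hXint).mul_const _
    have I2 : Integrable (fun ω => (X ω - A) * exp (l * B)) μ :=
      (hXint.sub (integrable_const A)).mul_const _
    rw [integral_div]
    congr 1
    rw [integral_add I1 I2, integral_mul_const, integral_mul_const,
      integral_sub (integrable_const B) hXint, integral_sub hXint (integrable_const A),
      integral_const, integral_const]
    simp [hm]
  rw [hrhs_eq] at hint_le
  have hmA : A ≤ m := by
    have : ∫ (_ : Ω), A ∂μ ≤ ∫ ω, X ω ∂μ :=
      integral_mono_ae (integrable_const A) hXint (by filter_upwards [hbdd] with ω h; exact h.1)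
    simpa using this
  have hmB : m ≤ B := by
    have : ∫ ω, X ω ∂μ ≤ ∫ (_ : Ω), B ∂μ :=
      integral_mono_ae hXint (integrable_const B) (by filter_upwards [hbdd] with ω h; exact h.2)
    simpa using this
  set p := (m - A) / (B - A) with hp
  have hp0 : 0 ≤ p := div_nonneg (by linarith) hc.le
  have hp1 : p ≤ 1 := by rw [hp, div_le_one hc]; linarith
  have hcore := soc_hoeffding_core hp0 hp1 (l * (B - A))
  have hfac : ((B - m) * exp (l * A) + (m - A) * exp (l * B)) / (B - A)
      = exp (l * A) * (1 - p + p * exp (l * (B - A))) := by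
    rw [hp]
    have : exp (l * B) = exp (l * A) * exp (l * (B - A)) := by
      rw [← exp_add]; ring_nf
    rw [this]
    field_simp
    ring
  have hfinal : exp (l * A) * (1 - p + p * exp (l * (B - A)))
      ≤ exp (l * m + l ^ 2 * (B - A) ^ 2 / 8) := by
    calc exp (l * A) * (1 - p + p * exp (l * (B - A)))
        ≤ exp (l * A) * exp (p * (l * (B - A)) + (l * (B - A)) ^ 2 / 8) :=
          mul_le_mul_of_nonneg_left hcore (exp_pos _).le
      _ = exp (l * A + p * (l * (B - A)) + (l * (B - A)) ^ 2 / 8) := by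
          rw [← exp_add]; ring_nf
      _ = exp (l * m + l ^ 2 * (B - A) ^ 2 / 8) := by
          congr 1
          have : p * (l * (B - A)) = l * (m - A) := by
            rw [hp]; field_simp
          rw [this]; ring
  calc ∫ ω, exp (l * X ω) ∂μ ≤ ((B - m) * exp (l * A) + (m - A) * exp (l * B)) / (B - A) := hint_le
    _ = exp (l * A) * (1 - p + p * exp (l * (B - A))) := hfac
    _ ≤ exp (l * m + l ^ 2 * (B - A) ^ 2 / 8) := hfinal

/-- **Hoeffding's inequality** (one-sided upper tail) for sums of independent bounded
random variables. -/
private lemma soc_hoeffding_tail {Ω : Type*} [MeasurableSpace Ω] (μ : Measure Ω)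
    [IsProbabilityMeasure μ]
    (t : ℕ) (ht : 1 ≤ t) (X : ℕ → Ω → ℝ) (A B : ℕ → ℝ)
    (hmeas : ∀ k < t, Measurable (X k))
    (hindep : iIndepFun (fun k : Fin t => X k.val) μ)
    (hbdd : ∀ k < t, ∀ᵐ ω ∂μ, A k ≤ X k ω ∧ X k ω ≤ B k)
    (hAB : ∀ k < t, A k < B k) (ε : ℝ) (hε : 0 ≤ ε) :
    (μ {ω | (∑ k ∈ range t, ∫ ω', X k ω' ∂μ) + ε ≤ ∑ k ∈ range t, X k ω}).toReal
      ≤ exp (-2 * ε ^ 2 / ∑ k ∈ range t, (B k - A k) ^ 2) := by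
  set C := ∑ k ∈ range t, (B k - A k) ^ 2 with hC
  have hCpos : 0 < C := by
    refine Finset.sum_pos' (fun k _ => sq_nonneg _) ⟨0, mem_range.2 ht, ?_⟩
    have h0 := hAB 0 ht
    have : 0 < B 0 - A 0 := sub_pos.2 h0
    positivity
  set l := 4 * ε / C with hl
  have hl0 : 0 ≤ l := by positivity
  set m := ∑ k ∈ range t, ∫ ω', X k ω' ∂μ with hm
  set Y : Fin t → Ω → ℝ := fun k => X k.val with hY
  have hYmeas : ∀ i : Fin t, Measurable (Y i) := fun i => hmeas i.val i.isLt
  have hYint : ∀ i : Fin t, Integrable (fun ω => exp (l * Y i ω)) μ := fun i =>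
    soc_integrable_exp_mul_of_bdd μ (hYmeas i) (hbdd i.val i.isLt) l
  have hsum_eq : ∀ ω, (∑ i : Fin t, Y i) ω = ∑ k ∈ range t, X k ω := by
    intro ω
    simp only [Finset.sum_apply, hY]
    exact Fin.sum_univ_eq_sum_range (fun k => X k ω) t
  have hint_sum : Integrable (fun ω => exp (l * (∑ i : Fin t, Y i) ω)) μ :=
    hindep.integrable_exp_mul_sum hYmeas (fun i _ => hYint i)
  set Z : Ω → ℝ := fun ω => (∑ k ∈ range t, X k ω) - m with hZ
  have hZint : Integrable (fun ω => exp (l * Z ω)) μ := by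
    have heq : (fun ω => exp (l * Z ω))
        = fun ω => exp (l * (∑ i : Fin t, Y i) ω) * exp (-(l * m)) := by
      funext ω
      rw [← exp_add, hsum_eq ω]
      congr 1
      simp only [hZ]
      ring
    rw [heq]
    exact hint_sum.mul_const _
  have hset : {ω | m + ε ≤ ∑ k ∈ range t, X k ω} = {ω | ε ≤ Z ω} := by
    ext ω; simp only [Set.mem_setOf_eq, hZ]; constructor <;> intro h <;> linarith
  have hchern := measure_ge_le_exp_mul_mgf (μ := μ) (X := Z) ε hl0 hZint
  rw [← hset] at hchern
  have hmgfZ : mgf Z μ l ≤ exp (-(l * m)) * ∏ i : Fin t, mgf (Y i) μ l := by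
    have h1 : mgf Z μ l = exp (-(l * m)) * mgf (∑ i : Fin t, Y i) μ l := by
      simp only [mgf]
      rw [← integral_const_mul]
      congr 1
      funext ω
      rw [← exp_add, hsum_eq ω]
      congr 1
      simp only [hZ]
      ring
    rw [h1, hindep.mgf_sum hYmeas]
  have hprod : ∏ i : Fin t, mgf (Y i) μ l
      ≤ ∏ i : Fin t, exp (l * (∫ ω', Y i ω' ∂μ) + l ^ 2 * (B i.val - A i.val) ^ 2 / 8) := by
    refine Finset.prod_le_prod (fun i _ => mgf_nonneg) (fun i _ => ?_)
    exact soc_hoeffding_mgf μ (hYmeas i) (hAB i.val i.isLt) (hbdd i.val i.isLt) l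
  have hprod_exp : ∏ i : Fin t, exp (l * (∫ ω', Y i ω' ∂μ) + l ^ 2 * (B i.val - A i.val) ^ 2 / 8)
      = exp (l * m + l ^ 2 * C / 8) := by
    rw [← Real.exp_sum]
    congr 1
    rw [Finset.sum_add_distrib, ← Finset.mul_sum, ← Finset.sum_div, ← Finset.mul_sum]
    congr 2
    · rw [hm]; exact Fin.sum_univ_eq_sum_range (fun k => ∫ ω', X k ω' ∂μ) t
    · rw [hC]
      congr 1
      exact Fin.sum_univ_eq_sum_range (fun k => (B k - A k) ^ 2) t
  calc (μ {ω | m + ε ≤ ∑ k ∈ range t, X k ω}).toReal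
      ≤ exp (-l * ε) * mgf Z μ l := hchern
    _ ≤ exp (-l * ε) * (exp (-(l * m)) * exp (l * m + l ^ 2 * C / 8)) := by
        refine mul_le_mul_of_nonneg_left ?_ (exp_pos _).le
        refine hmgfZ.trans ?_
        exact mul_le_mul_of_nonneg_left (hprod.trans_eq hprod_exp) (exp_pos _).le
    _ = exp (-l * ε + l ^ 2 * C / 8) := by rw [← exp_add, ← exp_add]; ring_nf
    _ = exp (-2 * ε ^ 2 / C) := by
        congr 1
        rw [hl]
        field_simp
        ring

end HoeffdingAux

/-- Proposition 1 of the paper (with ν = 1): the two deterministic inequalities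
under-approximate the feasible domain of the chance constraint
`ℙ(x̲ ≤ x_t ≤ x̄) ≥ 1 − δ` on the state of charge
`x_t = x₀ + Σ_{k<t} ρ (r_k − Σ_{j<N} u_{j,k})`. -/
theorem soc_chance_constraint_under_approximation
    {Ω : Type*} [MeasurableSpace Ω] (μ : Measure Ω) [IsProbabilityMeasure μ]
    (t N : ℕ) (ht : 1 ≤ t) (hN : 1 ≤ N)
    (r : ℕ → Ω → ℝ) (a b : ℕ → ℝ)
    (hmeas : ∀ k < t, Measurable (r k))
    (hindep : iIndepFun (fun k : Fin t => r k.val) μ)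
    (hbdd : ∀ k < t, ∀ᵐ ω ∂μ, a k ≤ r k ω ∧ r k ω ≤ b k)
    (hab : ∀ k < t, a k < b k)
    (u : ℕ → ℕ → ℝ) (ρ x₀ xlo xhi δ δt : ℝ)
    (hρ : 0 < ρ) (hx_bounds : xlo < xhi)
    (hδt0 : 0 < δt) (hδt1 : δt ≤ 1)
    (hδδt0 : 0 < δ - δt) (hδδt1 : δ - δt ≤ 1)
    (x : Ω → ℝ)
    (hx : ∀ ω, x ω = x₀ + ∑ k ∈ range t, ρ * (r k ω - ∑ j ∈ range N, u j k))
    (hineq₁ : xlo - x₀ - ρ * (∑ k ∈ range t, ∫ ω, r k ω ∂μ)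
        + ρ * (∑ k ∈ range t, ∑ j ∈ range N, u j k)
        + Real.sqrt (-(ρ ^ 2) * (∑ k ∈ range t, (b k - a k) ^ 2) * Real.log δt) ≤ 0)
    (hineq₂ : x₀ - xhi + ρ * (∑ k ∈ range t, ∫ ω, r k ω ∂μ)
        - ρ * (∑ k ∈ range t, ∑ j ∈ range N, u j k)
        + Real.sqrt (-(ρ ^ 2) * (∑ k ∈ range t, (b k - a k) ^ 2) * Real.log (δ - δt)) ≤ 0) :
    1 - δ ≤ (μ {ω | xlo ≤ x ω ∧ x ω ≤ xhi}).toReal := by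
  classical
  set C := ∑ k ∈ range t, (b k - a k) ^ 2 with hC
  have hCpos : 0 < C := by
    refine Finset.sum_pos' (fun k _ => sq_nonneg _) ⟨0, mem_range.2 ht, ?_⟩
    have : 0 < b 0 - a 0 := sub_pos.2 (hab 0 ht)
    positivity
  set m := ∑ k ∈ range t, ∫ ω, r k ω ∂μ with hm
  set U := ∑ k ∈ range t, ∑ j ∈ range N, u j k with hU
  set S : Ω → ℝ := fun ω => ∑ k ∈ range t, r k ω with hS
  have hxS : ∀ ω, x ω = x₀ + ρ * S ω - ρ * U := by
    intro ω
    rw [hx ω, hS, hU]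
    simp only [Finset.mul_sum, mul_sub]
    rw [Finset.sum_sub_distrib]
    ring
  -- the two deviations
  set ε₁ := Real.sqrt (C * (-Real.log δt)) with hε₁
  set ε₂ := Real.sqrt (C * (-Real.log (δ - δt))) with hε₂
  have hε₁0 : 0 ≤ ε₁ := Real.sqrt_nonneg _
  have hε₂0 : 0 ≤ ε₂ := Real.sqrt_nonneg _
  have hlog₁ : Real.log δt ≤ 0 := Real.log_nonpos hδt0.le hδt1
  have hlog₂ : Real.log (δ - δt) ≤ 0 := Real.log_nonpos hδδt0.le hδδt1
  -- rewrite the sqrt terms in the hypotheses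
  have hsqrt₁ : Real.sqrt (-(ρ ^ 2) * C * Real.log δt) = ρ * ε₁ := by
    have : -(ρ ^ 2) * C * Real.log δt = ρ ^ 2 * (C * (-Real.log δt)) := by ring
    rw [this, Real.sqrt_mul (sq_nonneg ρ), Real.sqrt_sq hρ.le, hε₁]
  have hsqrt₂ : Real.sqrt (-(ρ ^ 2) * C * Real.log (δ - δt)) = ρ * ε₂ := by
    have : -(ρ ^ 2) * C * Real.log (δ - δt) = ρ ^ 2 * (C * (-Real.log (δ - δt))) := by ring
    rw [this, Real.sqrt_mul (sq_nonneg ρ), Real.sqrt_sq hρ.le, hε₂]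
  rw [hsqrt₁] at hineq₁
  rw [hsqrt₂] at hineq₂
  -- tail events
  set E₁ : Set Ω := {ω | (∑ k ∈ range t, ∫ ω', -(r k ω') ∂μ) + ε₁ ≤ ∑ k ∈ range t, -(r k ω)}
    with hE₁
  set E₂ : Set Ω := {ω | m + ε₂ ≤ ∑ k ∈ range t, r k ω} with hE₂
  -- tail bounds
  have hbnd₂ : (μ E₂).toReal ≤ δ - δt := by
    have := soc_hoeffding_tail μ t ht r a b hmeas hindep hbdd hab ε₂ hε₂0
    rw [← hm, ← hC, ← hE₂] at this
    refine this.trans ?_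
    have hε₂sq : ε₂ ^ 2 = C * (-Real.log (δ - δt)) := by
      rw [hε₂, Real.sq_sqrt (mul_nonneg hCpos.le (neg_nonneg.2 hlog₂))]
    have : -2 * ε₂ ^ 2 / C = 2 * Real.log (δ - δt) := by
      rw [hε₂sq]; field_simp
    rw [this]
    calc Real.exp (2 * Real.log (δ - δt)) = (δ - δt) ^ 2 := by
          rw [two_mul, Real.exp_add, Real.exp_log hδδt0, sq]
      _ ≤ δ - δt := by nlinarith
  have hbnd₁ : (μ E₁).toReal ≤ δt := by
    have hindep' : iIndepFun
        (fun k : Fin t => fun ω => -(r k.val ω)) μ := by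
      have := hindep.comp (fun _ => fun y : ℝ => -y) (fun _ => measurable_neg)
      exact this
    have := soc_hoeffding_tail μ t ht (fun k ω => -(r k ω)) (fun k => -(b k)) (fun k => -(a k))
      (fun k hk => (hmeas k hk).neg) hindep'
      (fun k hk => by filter_upwards [hbdd k hk] with ω h; constructor <;> [linarith [h.2]; linarith [h.1]])
      (fun k hk => by have := hab k hk; show -(b k) < -(a k); linarith) ε₁ hε₁0
    have hCC : ∑ k ∈ range t, (-(a k) - -(b k)) ^ 2 = C := by
      rw [hC]; apply Finset.sum_congr rfl; intro k _; ring
    rw [hCC, ← hE₁] at this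
    refine this.trans ?_
    have hε₁sq : ε₁ ^ 2 = C * (-Real.log δt) := by
      rw [hε₁, Real.sq_sqrt (mul_nonneg hCpos.le (neg_nonneg.2 hlog₁))]
    have : -2 * ε₁ ^ 2 / C = 2 * Real.log δt := by
      rw [hε₁sq]; field_simp
    rw [this]
    calc Real.exp (2 * Real.log δt) = δt ^ 2 := by
          rw [two_mul, Real.exp_add, Real.exp_log hδt0, sq]
      _ ≤ δt := by nlinarith
  -- the good set and its complement
  have hxmeas : Measurable x := by
    have hxe : x = fun ω => x₀ + ∑ k ∈ range t, ρ * (r k ω - ∑ j ∈ range N, u j k) :=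
      funext hx
    rw [hxe]
    exact measurable_const.add (Finset.measurable_sum _ fun k hk =>
      (((hmeas k (mem_range.1 hk)).sub_const _).const_mul ρ))
  set G : Set Ω := {ω | xlo ≤ x ω ∧ x ω ≤ xhi} with hG
  have hGm : MeasurableSet G :=
    (measurableSet_le measurable_const hxmeas).inter (measurableSet_le hxmeas measurable_const)
  have hcompl : Gᶜ ⊆ E₁ ∪ E₂ := by
    intro ω hω
    simp only [hG, Set.mem_compl_iff, Set.mem_setOf_eq, not_and_or, not_le] at hω
    have hSsumneg : ∑ k ∈ range t, -(r k ω) = -(S ω) := by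
      rw [hS]; simp
    have hintneg : ∑ k ∈ range t, ∫ ω', -(r k ω') ∂μ = -m := by
      rw [hm]
      rw [← Finset.sum_neg_distrib]
      exact Finset.sum_congr rfl fun k _ => integral_neg _
    rcases hω with hω | hω
    · left
      rw [hE₁]
      simp only [Set.mem_setOf_eq]
      rw [hSsumneg, hintneg]
      -- x ω < xlo, hineq₁ : xlo - x₀ - ρ*m + ρ*U + ρ*ε₁ ≤ 0
      have hxω := hxS ω
      -- ρ * S ω < xlo - x₀ + ρ * U ≤ ρ * (m - ε₁)
      have hexp : ρ * (m - ε₁) = ρ * m - ρ * ε₁ := mul_sub ρ m ε₁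
      have h1 : ρ * S ω < ρ * (m - ε₁) := by rw [hexp]; linarith
      have h2 : S ω < m - ε₁ := lt_of_mul_lt_mul_left h1 hρ.le
      linarith
    · right
      rw [hE₂]
      simp only [Set.mem_setOf_eq]
      have hxω := hxS ω
      have hexp : ρ * (m + ε₂) = ρ * m + ρ * ε₂ := mul_add ρ m ε₂
      have h1 : ρ * (m + ε₂) < ρ * S ω := by rw [hexp]; linarith
      have h2 : m + ε₂ < S ω := lt_of_mul_lt_mul_left h1 hρ.le
      rw [hS] at h2
      linarith
  -- measure arithmetic
  have hμcompl : (μ Gᶜ).toReal ≤ δ := by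
    have h1 : μ Gᶜ ≤ μ E₁ + μ E₂ := (measure_mono hcompl).trans (measure_union_le E₁ E₂)
    have h2 : (μ Gᶜ).toReal ≤ (μ E₁ + μ E₂).toReal := by
      refine ENNReal.toReal_mono ?_ h1
      exact ENNReal.add_ne_top.2 ⟨measure_ne_top μ E₁, measure_ne_top μ E₂⟩
    rw [ENNReal.toReal_add (measure_ne_top μ E₁) (measure_ne_top μ E₂)] at h2
    linarith
  have hsplit : (μ G).toReal + (μ Gᶜ).toReal = 1 := by
    rw [← ENNReal.toReal_add (measure_ne_top μ G) (measure_ne_top μ Gᶜ),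
      measure_add_measure_compl hGm]
    simp
  linarith
end

section
/- Suppose both of the following deterministic inequalities hold: (i) r − ε − x₀ − ρ·Σ_{k=0}^{τ−1} E[r_k] + ρ·Σ_{k=0}^{τ−1} Σ_{j=1}^{N} u_{j,k} + sqrt( −ρ² · (Σ_{k=0}^{τ−1} (b_k − a_k)²) · ln δ̃ ) ≤ 0, and (ii) x₀ − r − ε + ρ·Σ_{k=0}^{τ−1} E[r_k] − ρ·Σ_{k=0}^{τ−1} Σ_{j=1}^{N} u_{j,k} + sqrt( −ρ² · (Σ_{k=0}^{τ−1} (b_k − a_k)²) · ln (δ − δ̃) ) ≤ 0. Then the chance constraint on the final state of charge ℙ( |x_τ − r| ≤ ε ) ≥ 1 − δ holds. -/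
open MeasureTheory ProbabilityTheory Finset

lemma hoeffding_quarter (p q w : ℝ) (hp : 0 ≤ p) (hq : 0 ≤ q) (hpq : p + q = 1)
    (hw : 0 ≤ w) :
    p * Real.exp (w * q) + q * Real.exp (-(w * p)) ≤ Real.exp (w ^ 2 / 4) := by
  have hD : ∀ v : ℝ, 0 < p * Real.exp v + q := by
    intro v
    rcases eq_or_lt_of_le hq with h | h
    · have hp1 : p = 1 := by linarith
      have := Real.exp_pos v
      nlinarith
    · nlinarith [mul_nonneg hp (Real.exp_pos v).le]
  set φ : ℝ → ℝ := fun v => v * (p * Real.exp v + q) - 2 * p * q * (Real.exp v - 1) with hφdef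
  have hφ' : ∀ v : ℝ, HasDerivAt φ (p * Real.exp v * (1 + v - 2 * q) + q) v := by
    intro v
    have h1 : HasDerivAt (fun v : ℝ => v * (p * Real.exp v + q))
        (1 * (p * Real.exp v + q) + v * (p * Real.exp v)) v :=
      (hasDerivAt_id v).mul (((Real.hasDerivAt_exp v).const_mul p).add_const q)
    have h2 : HasDerivAt (fun v : ℝ => 2 * p * q * (Real.exp v - 1))
        (2 * p * q * Real.exp v) v := ((Real.hasDerivAt_exp v).sub_const 1).const_mul (2 * p * q)
    have := h1.sub h2
    exact this.congr_deriv (by ring)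
  have hφ'nonneg : ∀ v : ℝ, 0 ≤ v → 0 ≤ p * Real.exp v * (1 + v - 2 * q) + q := by
    intro v hv
    by_cases h : 0 ≤ 1 + v - 2 * q
    · exact add_nonneg (mul_nonneg (mul_nonneg hp (Real.exp_pos v).le) h) hq
    · push_neg at h
      have hq5 : 1 / 2 < q := by linarith
      have hp5 : p < 1 / 2 := by linarith
      have h1 := Real.add_one_le_exp (2 * q - 2 - v)
      have h2 : Real.exp v * (2 * q - 1 - v) ≤ Real.exp v * Real.exp (2 * q - 2 - v) := by
        have : (2 * q - 2 - v) + 1 = 2 * q - 1 - v := by ring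
        nlinarith [Real.exp_pos v]
      rw [← Real.exp_add] at h2
      have h3 : Real.exp (v + (2 * q - 2 - v)) ≤ 1 := by
        rw [Real.exp_le_one_iff]
        linarith
      have h4 : Real.exp v * (2 * q - 1 - v) ≤ 1 := le_trans h2 h3
      nlinarith [mul_le_mul_of_nonneg_left h4 hp]
  have hφmono : MonotoneOn φ (Set.Ici (0 : ℝ)) := by
    have hdiff : Differentiable ℝ φ := fun v => (hφ' v).differentiableAt
    refine monotoneOn_of_deriv_nonneg (convex_Ici 0) hdiff.continuous.continuousOn
      (hdiff.differentiableOn) ?_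
    intro v hv
    rw [interior_Ici] at hv
    rw [(hφ' v).deriv]
    exact hφ'nonneg v (le_of_lt hv)
  have hφnonneg : ∀ v : ℝ, 0 ≤ v → 0 ≤ φ v := by
    intro v hv
    have h0 : φ 0 = 0 := by simp [hφdef]
    have := hφmono (Set.self_mem_Ici) hv hv
    rw [h0] at this
    exact this
  set H : ℝ → ℝ := fun v => v ^ 2 / 4 + v * p - Real.log (p * Real.exp v + q) with hHdef
  have hH' : ∀ v : ℝ, HasDerivAt H (v / 2 + p - p * Real.exp v / (p * Real.exp v + q)) v := by
    intro v
    have h1 : HasDerivAt (fun v : ℝ => v ^ 2 / 4 + v * p) (v / 2 + p) v := by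
      have := ((hasDerivAt_pow 2 v).div_const 4).add ((hasDerivAt_id v).mul_const p)
      exact this.congr_deriv (by simp; ring)
    have h2 : HasDerivAt (fun v : ℝ => Real.log (p * Real.exp v + q))
        ((p * Real.exp v) / (p * Real.exp v + q)) v := by
      have hinner : HasDerivAt (fun v : ℝ => p * Real.exp v + q) (p * Real.exp v) v :=
        ((Real.hasDerivAt_exp v).const_mul p).add_const q
      exact hinner.log (hD v).ne'
    exact h1.sub h2
  have hH'nonneg : ∀ v : ℝ, 0 ≤ v → 0 ≤ v / 2 + p - p * Real.exp v / (p * Real.exp v + q) := by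
    intro v hv
    rw [sub_nonneg, div_le_iff₀ (hD v)]
    have hid : (v / 2 + p) * (p * Real.exp v + q) - p * Real.exp v = φ v / 2 := by
      simp only [hφdef]
      linear_combination (p * Real.exp v) * hpq
    have h2 : 0 ≤ (v / 2 + p) * (p * Real.exp v + q) - p * Real.exp v := by
      rw [hid]
      exact div_nonneg (hφnonneg v hv) (by norm_num)
    linarith
  have hHmono : MonotoneOn H (Set.Ici (0 : ℝ)) := by
    have hdiff : Differentiable ℝ H := fun v => (hH' v).differentiableAt
    refine monotoneOn_of_deriv_nonneg (convex_Ici 0) hdiff.continuous.continuousOn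
      (hdiff.differentiableOn) ?_
    intro v hv
    rw [interior_Ici] at hv
    rw [(hH' v).deriv]
    exact hH'nonneg v (le_of_lt hv)
  have hHw : 0 ≤ H w := by
    have h0 : H 0 = 0 := by simp [hHdef, hpq]
    have := hHmono (Set.self_mem_Ici) hw hw
    rw [h0] at this
    exact this
  have hlog : Real.log (p * Real.exp w + q) ≤ w ^ 2 / 4 + w * p := by
    simp only [hHdef] at hHw; linarith
  have hmain : p * Real.exp w + q ≤ Real.exp (w ^ 2 / 4 + w * p) :=
    (Real.log_le_iff_le_exp (hD w)).mp hlog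
  have hsplit : Real.exp (w * q) = Real.exp w * Real.exp (-(w * p)) := by
    rw [← Real.exp_add]
    congr 1
    linear_combination w * hpq
  have hfin : (p * Real.exp w + q) * Real.exp (-(w * p)) ≤
      Real.exp (w ^ 2 / 4 + w * p) * Real.exp (-(w * p)) :=
    mul_le_mul_of_nonneg_right hmain (Real.exp_pos _).le
  have hexp : Real.exp (w ^ 2 / 4 + w * p) * Real.exp (-(w * p)) = Real.exp (w ^ 2 / 4) := by
    rw [← Real.exp_add]; ring_nf
  rw [hexp] at hfin
  calc p * Real.exp (w * q) + q * Real.exp (-(w * p))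
      = (p * Real.exp w + q) * Real.exp (-(w * p)) := by rw [hsplit]; ring
    _ ≤ Real.exp (w ^ 2 / 4) := hfin

lemma integrable_of_bddae {Ω : Type*} [MeasurableSpace Ω] (μ : Measure Ω)
    [IsProbabilityMeasure μ] (X : Ω → ℝ) (a b : ℝ) (hX : Measurable X)
    (hbd : ∀ᵐ ω ∂μ, a ≤ X ω ∧ X ω ≤ b) : Integrable X μ := by
  refine (integrable_const (max |a| |b|)).mono' hX.aestronglyMeasurable ?_
  filter_upwards [hbd] with ω ⟨h1, h2⟩
  rw [Real.norm_eq_abs, abs_le]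
  constructor
  · calc -max |a| |b| ≤ -|a| := by simp
      _ ≤ a := neg_abs_le a
      _ ≤ X ω := h1
  · calc X ω ≤ b := h2
      _ ≤ |b| := le_abs_self b
      _ ≤ max |a| |b| := le_max_right _ _

lemma integrable_exp_of_bddae {Ω : Type*} [MeasurableSpace Ω] (μ : Measure Ω)
    [IsProbabilityMeasure μ] (X : Ω → ℝ) (a b s : ℝ) (hX : Measurable X)
    (hbd : ∀ᵐ ω ∂μ, a ≤ X ω ∧ X ω ≤ b) :
    Integrable (fun ω => Real.exp (s * X ω)) μ := by
  refine (integrable_const (Real.exp (|s| * max |a| |b|))).mono'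
    ((hX.const_mul s).exp.aestronglyMeasurable) ?_
  filter_upwards [hbd] with ω ⟨h1, h2⟩
  rw [Real.norm_eq_abs, abs_of_pos (Real.exp_pos _), Real.exp_le_exp]
  have hXb : |X ω| ≤ max |a| |b| := by
    rw [abs_le]
    constructor
    · calc -max |a| |b| ≤ -|a| := by simp
        _ ≤ a := neg_abs_le a
        _ ≤ X ω := h1
    · calc X ω ≤ b := h2
        _ ≤ |b| := le_abs_self b
        _ ≤ max |a| |b| := le_max_right _ _
  calc s * X ω ≤ |s * X ω| := le_abs_self _
    _ = |s| * |X ω| := abs_mul s (X ω)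
    _ ≤ |s| * max |a| |b| := by
        exact mul_le_mul_of_nonneg_left hXb (abs_nonneg s)

lemma mgf_le_of_bddae {Ω : Type*} [MeasurableSpace Ω] (μ : Measure Ω)
    [IsProbabilityMeasure μ] (X : Ω → ℝ) (a b s : ℝ) (hX : Measurable X)
    (hbd : ∀ᵐ ω ∂μ, a ≤ X ω ∧ X ω ≤ b) (hab : a < b) (hs : 0 ≤ s) :
    mgf X μ s ≤ Real.exp (s * (∫ ω, X ω ∂μ) + s ^ 2 * (b - a) ^ 2 / 4) := by
  have hba : (0:ℝ) < b - a := by linarith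
  have hint : Integrable X μ := integrable_of_bddae μ X a b hX hbd
  set m : ℝ := ∫ ω, X ω ∂μ with hm
  have hma : a ≤ m := by
    have : ∫ _ω, a ∂μ ≤ ∫ ω, X ω ∂μ :=
      integral_mono_ae (integrable_const a) hint (by filter_upwards [hbd] with ω h using h.1)
    simpa using this
  have hmb : m ≤ b := by
    have : ∫ ω, X ω ∂μ ≤ ∫ _ω, b ∂μ :=
      integral_mono_ae hint (integrable_const b) (by filter_upwards [hbd] with ω h using h.2)
    simpa using this
  set c₂ : ℝ := (Real.exp (s * b) - Real.exp (s * a)) / (b - a) with hc2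
  set c₁ : ℝ := (b * Real.exp (s * a) - a * Real.exp (s * b)) / (b - a) with hc1
  -- pointwise convexity bound
  have hpt : ∀ᵐ ω ∂μ, Real.exp (s * X ω) ≤ c₁ + c₂ * X ω := by
    filter_upwards [hbd] with ω ⟨h1, h2⟩
    have hcx := convexOn_exp.2 (Set.mem_univ (s * a)) (Set.mem_univ (s * b))
      (show (0:ℝ) ≤ (b - X ω) / (b - a) from div_nonneg (by linarith) hba.le)
      (show (0:ℝ) ≤ (X ω - a) / (b - a) from div_nonneg (by linarith) hba.le)
      (by field_simp; ring)
    have hne : b - a ≠ 0 := hba.ne'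
    simp only [smul_eq_mul] at hcx
    have harg : (b - X ω) / (b - a) * (s * a) + (X ω - a) / (b - a) * (s * b) = s * X ω := by
      field_simp
      ring
    rw [harg] at hcx
    calc Real.exp (s * X ω)
        ≤ (b - X ω) / (b - a) * Real.exp (s * a) + (X ω - a) / (b - a) * Real.exp (s * b) := by
          simpa using hcx
      _ = c₁ + c₂ * X ω := by rw [hc1, hc2]; field_simp; ring
  have hintexp : Integrable (fun ω => Real.exp (s * X ω)) μ :=
    integrable_exp_of_bddae μ X a b s hX hbd
  have hintrhs : Integrable (fun ω => c₁ + c₂ * X ω) μ :=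
    (integrable_const c₁).add (hint.const_mul c₂)
  have hmgf : mgf X μ s ≤ c₁ + c₂ * m := by
    have := integral_mono_ae hintexp hintrhs hpt
    calc mgf X μ s = ∫ ω, Real.exp (s * X ω) ∂μ := rfl
      _ ≤ ∫ ω, (c₁ + c₂ * X ω) ∂μ := this
      _ = c₁ + c₂ * m := by
          rw [integral_add (integrable_const c₁) (hint.const_mul c₂), integral_const,
            integral_const_mul c₂ X]
          simp [hm]
  -- now apply the scalar lemma
  set p : ℝ := (m - a) / (b - a) with hp'
  set q : ℝ := (b - m) / (b - a) with hq'
  set w : ℝ := s * (b - a) with hw'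
  have hp0 : 0 ≤ p := div_nonneg (by linarith) hba.le
  have hq0 : 0 ≤ q := div_nonneg (by linarith) hba.le
  have hpq : p + q = 1 := by rw [hp', hq']; field_simp; ring
  have hw0 : 0 ≤ w := mul_nonneg hs hba.le
  have hkey := hoeffding_quarter p q w hp0 hq0 hpq hw0
  have he1 : Real.exp (s * m) * Real.exp (w * q) = Real.exp (s * b) := by
    rw [← Real.exp_add]
    congr 1
    rw [hw', hq']
    field_simp
    ring
  have he2 : Real.exp (s * m) * Real.exp (-(w * p)) = Real.exp (s * a) := by
    rw [← Real.exp_add]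
    congr 1
    rw [hw', hp']
    field_simp
    ring
  have hc : c₁ + c₂ * m = Real.exp (s * m) * (p * Real.exp (w * q) + q * Real.exp (-(w * p))) := by
    have : Real.exp (s * m) * (p * Real.exp (w * q) + q * Real.exp (-(w * p)))
        = p * (Real.exp (s * m) * Real.exp (w * q)) + q * (Real.exp (s * m) * Real.exp (-(w * p))) := by
      ring
    rw [this, he1, he2, hc1, hc2, hp', hq']
    field_simp
    ring
  have hfin : c₁ + c₂ * m ≤ Real.exp (s * m) * Real.exp (w ^ 2 / 4) := by
    rw [hc]
    exact mul_le_mul_of_nonneg_left hkey (Real.exp_pos _).le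
  have hexp : Real.exp (s * m) * Real.exp (w ^ 2 / 4) = Real.exp (s * m + s ^ 2 * (b - a) ^ 2 / 4) := by
    rw [← Real.exp_add, hw']
    ring_nf
  rw [hexp] at hfin
  exact hmgf.trans hfin

lemma hoeffding_tail_bound {Ω : Type*} [MeasurableSpace Ω] (μ : Measure Ω)
    [IsProbabilityMeasure μ] (n : ℕ) (hn : 1 ≤ n) (X : ℕ → Ω → ℝ) (a b : ℕ → ℝ)
    (hmeas : ∀ k < n, Measurable (X k))
    (hindep : iIndepFun (fun k : Fin n => X k.val) μ)
    (hbdd : ∀ k < n, ∀ᵐ ω ∂μ, a k ≤ X k ω ∧ X k ω ≤ b k)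
    (hab : ∀ k < n, a k < b k) (t : ℝ) (ht : 0 ≤ t) :
    (μ {ω | (∑ k ∈ range n, ∫ ω', X k ω' ∂μ) + t ≤ ∑ k ∈ range n, X k ω}).toReal
      ≤ Real.exp (-(t ^ 2) / (∑ k ∈ range n, (b k - a k) ^ 2)) := by
  set V : ℝ := ∑ k ∈ range n, (b k - a k) ^ 2 with hV
  have hV0 : 0 < V := by
    refine Finset.sum_pos' (fun k _ => sq_nonneg _) ⟨0, Finset.mem_range.mpr hn, ?_⟩
    exact pow_pos (sub_pos.mpr (hab 0 hn)) 2
  set s : ℝ := 2 * t / V with hs'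
  have hs0 : 0 ≤ s := div_nonneg (by linarith) hV0.le
  set Y : Fin n → Ω → ℝ := fun i => X i.val with hY
  have hYmeas : ∀ i : Fin n, Measurable (Y i) := fun i => hmeas i.val i.isLt
  have hYint : ∀ i : Fin n, Integrable (fun ω => Real.exp (s * Y i ω)) μ := fun i =>
    integrable_exp_of_bddae μ (Y i) (a i.val) (b i.val) s (hYmeas i) (hbdd i.val i.isLt)
  have hSint : Integrable (fun ω => Real.exp (s * (∑ i : Fin n, Y i) ω)) μ :=
    hindep.integrable_exp_mul_sum hYmeas (fun i _ => hYint i)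
  set M : ℝ := ∑ k ∈ range n, ∫ ω', X k ω' ∂μ with hM
  have hchern := measure_ge_le_exp_mul_mgf (X := ∑ i : Fin n, Y i) (μ := μ) (M + t) hs0 hSint
  have hset : {ω | M + t ≤ (∑ i : Fin n, Y i) ω}
      = {ω | M + t ≤ ∑ k ∈ range n, X k ω} := by
    ext ω
    simp only [Set.mem_setOf_eq, Finset.sum_apply]
    rw [Fin.sum_univ_eq_sum_range (fun k => X k ω) n]
  rw [hset] at hchern
  have hmgf : mgf (∑ i : Fin n, Y i) μ s ≤ Real.exp (s * M + s ^ 2 * V / 4) := by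
    rw [hindep.mgf_sum hYmeas]
    have hprod : ∏ i : Fin n, mgf (Y i) μ s
        ≤ ∏ i : Fin n, Real.exp (s * (∫ ω, Y i ω ∂μ) + s ^ 2 * (b i.val - a i.val) ^ 2 / 4) := by
      refine Finset.prod_le_prod (fun i _ => mgf_nonneg) (fun i _ => ?_)
      exact mgf_le_of_bddae μ (Y i) (a i.val) (b i.val) s (hYmeas i)
        (hbdd i.val i.isLt) (hab i.val i.isLt) hs0
    refine hprod.trans_eq ?_
    rw [← Real.exp_sum]
    congr 1
    rw [Finset.sum_add_distrib]
    congr 1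
    · rw [← Finset.mul_sum, hM]
      congr 1
      exact Fin.sum_univ_eq_sum_range (fun k => ∫ ω', X k ω' ∂μ) n
    · rw [hV, ← Fin.sum_univ_eq_sum_range (fun k => (b k - a k) ^ 2) n]
      rw [Finset.mul_sum, Finset.sum_div]
  calc (μ {ω | M + t ≤ ∑ k ∈ range n, X k ω}).toReal
      ≤ Real.exp (-s * (M + t)) * mgf (∑ i : Fin n, Y i) μ s := hchern
    _ ≤ Real.exp (-s * (M + t)) * Real.exp (s * M + s ^ 2 * V / 4) :=
        mul_le_mul_of_nonneg_left hmgf (Real.exp_pos _).le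
    _ = Real.exp (-(t ^ 2) / V) := by
        rw [← Real.exp_add]
        congr 1
        rw [hs']
        field_simp
        ring

/-- Proposition 2 of the paper (with ν = 1): the two deterministic inequalities
under-approximate the feasible domain of the terminal chance constraint
`ℙ(|x_τ − r| ≤ ε) ≥ 1 − δ` on the final state of charge
`x_τ = x₀ + Σ_{k<τ} ρ (r_k − Σ_{j<N} u_{j,k})`. -/
theorem final_soc_chance_constraint_under_approximation
    {Ω : Type*} [MeasurableSpace Ω] (μ : Measure Ω) [IsProbabilityMeasure μ]
    (τ N : ℕ) (hτ : 1 ≤ τ) (hN : 1 ≤ N)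
    (r : ℕ → Ω → ℝ) (a b : ℕ → ℝ)
    (hmeas : ∀ k < τ, Measurable (r k))
    (hindep : iIndepFun (fun k : Fin τ => r k.val) μ)
    (hbdd : ∀ k < τ, ∀ᵐ ω ∂μ, a k ≤ r k ω ∧ r k ω ≤ b k)
    (hab : ∀ k < τ, a k < b k)
    (u : ℕ → ℕ → ℝ) (ρ x₀ rtar ε δ δt : ℝ)
    (hρ : 0 < ρ) (hε : 0 < ε)
    (hδt0 : 0 < δt) (hδt1 : δt ≤ 1)
    (hδδt0 : 0 < δ - δt) (hδδt1 : δ - δt ≤ 1)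
    (x : Ω → ℝ)
    (hx : ∀ ω, x ω = x₀ + ∑ k ∈ range τ, ρ * (r k ω - ∑ j ∈ range N, u j k))
    (hineq₁ : rtar - ε - x₀ - ρ * (∑ k ∈ range τ, ∫ ω, r k ω ∂μ)
        + ρ * (∑ k ∈ range τ, ∑ j ∈ range N, u j k)
        + Real.sqrt (-(ρ ^ 2) * (∑ k ∈ range τ, (b k - a k) ^ 2) * Real.log δt) ≤ 0)
    (hineq₂ : x₀ - rtar - ε + ρ * (∑ k ∈ range τ, ∫ ω, r k ω ∂μ)
        - ρ * (∑ k ∈ range τ, ∑ j ∈ range N, u j k)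
        + Real.sqrt (-(ρ ^ 2) * (∑ k ∈ range τ, (b k - a k) ^ 2) * Real.log (δ - δt)) ≤ 0) :
    1 - δ ≤ (μ {ω | |x ω - rtar| ≤ ε}).toReal := by
  set IR : ℝ := ∑ k ∈ range τ, ∫ ω, r k ω ∂μ with hIR
  set U : ℝ := ∑ k ∈ range τ, ∑ j ∈ range N, u j k with hU
  set Sab : ℝ := ∑ k ∈ range τ, (b k - a k) ^ 2 with hSab
  have hSab0 : 0 < Sab := by
    refine Finset.sum_pos' (fun k _ => sq_nonneg _) ⟨0, Finset.mem_range.mpr hτ, ?_⟩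
    exact pow_pos (sub_pos.mpr (hab 0 hτ)) 2
  have hV0 : 0 < ρ ^ 2 * Sab := by positivity
  -- rewrite x as x₀ + ∑ ρ r - ρ U
  have hxs : ∀ ω, x ω = x₀ + (∑ k ∈ range τ, ρ * r k ω) - ρ * U := by
    intro ω
    rw [hx ω, hU, Finset.mul_sum]
    rw [show (∑ k ∈ range τ, ρ * (r k ω - ∑ j ∈ range N, u j k))
        = (∑ k ∈ range τ, (ρ * r k ω - ρ * (∑ j ∈ range N, u j k))) from
      Finset.sum_congr rfl (fun k _ => by ring)]
    rw [Finset.sum_sub_distrib]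
    ring
  -- thresholds
  set s₁ : ℝ := Real.sqrt (-(ρ ^ 2) * Sab * Real.log δt) with hs₁
  set s₂ : ℝ := Real.sqrt (-(ρ ^ 2) * Sab * Real.log (δ - δt)) with hs₂
  set t₁ : ℝ := ε + x₀ + ρ * IR - ρ * U - rtar with ht₁def
  set t₂ : ℝ := rtar + ε - x₀ + ρ * U - ρ * IR with ht₂def
  have hs₁t : s₁ ≤ t₁ := by rw [ht₁def]; linarith
  have hs₂t : s₂ ≤ t₂ := by rw [ht₂def]; linarith
  have ht₁0 : 0 ≤ t₁ := le_trans (Real.sqrt_nonneg _) hs₁t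
  have ht₂0 : 0 ≤ t₂ := le_trans (Real.sqrt_nonneg _) hs₂t
  -- generic tail-to-delta step
  have hstep : ∀ (d t' : ℝ), 0 < d → d ≤ 1 → Real.sqrt (-(ρ ^ 2) * Sab * Real.log d) ≤ t' →
      Real.exp (-(t' ^ 2) / (ρ ^ 2 * Sab)) ≤ d := by
    intro d t' hd0 hd1 hst
    have hlog : Real.log d ≤ 0 := Real.log_nonpos hd0.le hd1
    have harg : 0 ≤ -(ρ ^ 2) * Sab * Real.log d := by nlinarith
    have hsq : Real.sqrt (-(ρ ^ 2) * Sab * Real.log d) ^ 2 = -(ρ ^ 2) * Sab * Real.log d :=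
      Real.sq_sqrt harg
    have ht'0 : 0 ≤ t' := le_trans (Real.sqrt_nonneg _) hst
    have ht'sq : -(ρ ^ 2) * Sab * Real.log d ≤ t' ^ 2 := by
      rw [← hsq]
      exact pow_le_pow_left₀ (Real.sqrt_nonneg _) hst 2
    have : -(t' ^ 2) / (ρ ^ 2 * Sab) ≤ Real.log d := by
      rw [div_le_iff₀ hV0]
      nlinarith
    calc Real.exp (-(t' ^ 2) / (ρ ^ 2 * Sab)) ≤ Real.exp (Real.log d) := Real.exp_le_exp.mpr this
      _ = d := Real.exp_log hd0
  -- upper tail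
  have hindep₂ : iIndepFun
      (fun k : Fin τ => fun ω => ρ * r k.val ω) μ :=
    hindep.comp (fun _ => fun y => ρ * y) (fun _ => measurable_const_mul ρ)
  have hbdd₂ : ∀ k < τ, ∀ᵐ ω ∂μ, ρ * a k ≤ ρ * r k ω ∧ ρ * r k ω ≤ ρ * b k := by
    intro k hk
    filter_upwards [hbdd k hk] with ω ⟨h1, h2⟩
    exact ⟨mul_le_mul_of_nonneg_left h1 hρ.le, mul_le_mul_of_nonneg_left h2 hρ.le⟩
  have htail₂ := hoeffding_tail_bound μ τ hτ (fun k ω => ρ * r k ω)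
    (fun k => ρ * a k) (fun k => ρ * b k)
    (fun k hk => (hmeas k hk).const_mul ρ) hindep₂ hbdd₂
    (fun k hk => by show ρ * a k < ρ * b k; exact mul_lt_mul_of_pos_left (hab k hk) hρ) t₂ ht₂0
  have hVeq₂ : (∑ k ∈ range τ, (ρ * b k - ρ * a k) ^ 2) = ρ ^ 2 * Sab := by
    rw [hSab, Finset.mul_sum]
    exact Finset.sum_congr rfl (fun k _ => by ring)
  have hMeq₂ : (∑ k ∈ range τ, ∫ ω', ρ * r k ω' ∂μ) = ρ * IR := by
    rw [hIR, Finset.mul_sum]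
    exact Finset.sum_congr rfl (fun k _ => integral_const_mul ρ _)
  rw [hVeq₂, hMeq₂] at htail₂
  have hB : (μ {ω | ρ * IR + t₂ ≤ ∑ k ∈ range τ, ρ * r k ω}).toReal ≤ δ - δt :=
    htail₂.trans (hstep (δ - δt) t₂ hδδt0 hδδt1 hs₂t)
  -- lower tail
  have hindep₁ : iIndepFun
      (fun k : Fin τ => fun ω => -(ρ * r k.val ω)) μ :=
    hindep.comp (fun _ => fun y => -(ρ * y)) (fun _ => (measurable_const_mul ρ).neg)
  have hbdd₁ : ∀ k < τ, ∀ᵐ ω ∂μ, -(ρ * b k) ≤ -(ρ * r k ω) ∧ -(ρ * r k ω) ≤ -(ρ * a k) := by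
    intro k hk
    filter_upwards [hbdd k hk] with ω ⟨h1, h2⟩
    constructor
    · exact neg_le_neg (mul_le_mul_of_nonneg_left h2 hρ.le)
    · exact neg_le_neg (mul_le_mul_of_nonneg_left h1 hρ.le)
  have htail₁ := hoeffding_tail_bound μ τ hτ (fun k ω => -(ρ * r k ω))
    (fun k => -(ρ * b k)) (fun k => -(ρ * a k))
    (fun k hk => ((hmeas k hk).const_mul ρ).neg) hindep₁ hbdd₁
    (fun k hk => by
      show -(ρ * b k) < -(ρ * a k)
      exact neg_lt_neg (mul_lt_mul_of_pos_left (hab k hk) hρ)) t₁ ht₁0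
  have hVeq₁ : (∑ k ∈ range τ, (-(ρ * a k) - -(ρ * b k)) ^ 2) = ρ ^ 2 * Sab := by
    rw [hSab, Finset.mul_sum]
    exact Finset.sum_congr rfl (fun k _ => by ring)
  have hMeq₁ : (∑ k ∈ range τ, ∫ ω', -(ρ * r k ω') ∂μ) = -(ρ * IR) := by
    rw [hIR, Finset.mul_sum, ← Finset.sum_neg_distrib]
    refine Finset.sum_congr rfl (fun k _ => ?_)
    rw [integral_neg, integral_const_mul]
  rw [hVeq₁, hMeq₁] at htail₁
  have hA : (μ {ω | -(ρ * IR) + t₁ ≤ ∑ k ∈ range τ, -(ρ * r k ω)}).toReal ≤ δt :=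
    htail₁.trans (hstep δt t₁ hδt0 hδt1 hs₁t)
  -- measurability
  have hxmeas : Measurable x := by
    rw [funext hx]
    refine measurable_const.add ?_
    exact Finset.measurable_sum _ (fun k hk =>
      ((hmeas k (Finset.mem_range.mp hk)).sub measurable_const).const_mul ρ)
  have hE : MeasurableSet {ω | |x ω - rtar| ≤ ε} :=
    measurableSet_le (hxmeas.sub measurable_const).abs measurable_const
  -- complement inclusion
  have hsub : {ω | |x ω - rtar| ≤ ε}ᶜ ⊆
      {ω | -(ρ * IR) + t₁ ≤ ∑ k ∈ range τ, -(ρ * r k ω)}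
      ∪ {ω | ρ * IR + t₂ ≤ ∑ k ∈ range τ, ρ * r k ω} := by
    intro ω hω
    simp only [Set.mem_compl_iff, Set.mem_setOf_eq, not_le] at hω
    rcases lt_abs.mp hω with h | h
    · right
      simp only [Set.mem_setOf_eq]
      have := hxs ω
      rw [ht₂def]
      linarith
    · left
      simp only [Set.mem_setOf_eq]
      rw [Finset.sum_neg_distrib]
      have := hxs ω
      rw [ht₁def]
      linarith
  -- conclude
  have hcompl : (μ {ω | |x ω - rtar| ≤ ε}ᶜ).toReal ≤ δ := by
    have h1 : μ {ω | |x ω - rtar| ≤ ε}ᶜ ≤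
        μ {ω | -(ρ * IR) + t₁ ≤ ∑ k ∈ range τ, -(ρ * r k ω)}
        + μ {ω | ρ * IR + t₂ ≤ ∑ k ∈ range τ, ρ * r k ω} :=
      (measure_mono hsub).trans (measure_union_le _ _)
    have h2 := ENNReal.toReal_mono
      (ENNReal.add_ne_top.mpr ⟨measure_ne_top μ _, measure_ne_top μ _⟩) h1
    rw [ENNReal.toReal_add (measure_ne_top μ _) (measure_ne_top μ _)] at h2
    linarith
  have hfin : (μ {ω | |x ω - rtar| ≤ ε}ᶜ).toReal
      = 1 - (μ {ω | |x ω - rtar| ≤ ε}).toReal := by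
    rw [prob_compl_eq_one_sub hE,
      ENNReal.toReal_sub_of_le prob_le_one ENNReal.one_ne_top]
    simp
  linarith [hfin ▸ hcompl]
end

section
/- Suppose both of the following deterministic inequalities hold: (i) Σ_{j=1}^{N} u_j − Σ_{j=1}^{N} E[d_j] + sqrt( −(Σ_{j=1}^{N} (f_j − c_j)²) · ln δ̃ ) ≤ 0, and (ii) −ḡ + Σ_{j=1}^{N} E[d_j] − Σ_{j=1}^{N} u_j + sqrt( −(Σ_{j=1}^{N} (f_j − c_j)²) · ln (δ − δ̃) ) ≤ 0. Then the chance constraint ℙ( 0 ≤ g ≤ ḡ ) ≥ 1 − δ holds. -/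
open MeasureTheory ProbabilityTheory Finset

section Aux
open Real


lemma nonneg_of_deriv {f f' : ℝ → ℝ} (hd : ∀ x, HasDerivAt f (f' x) x)
    (h0 : f 0 = 0) (hf' : ∀ x, 0 ≤ x → 0 ≤ f' x) : ∀ x, 0 ≤ x → 0 ≤ f x := by
  intro x hx
  have hmono : MonotoneOn f (Set.Ici 0) := by
    refine monotoneOn_of_deriv_nonneg (convex_Ici 0)
      (fun y _ => (hd y).continuousAt.continuousWithinAt)
      (fun y hy => ((hd y).differentiableAt).differentiableWithinAt) ?_
    intro y hy
    rw [(hd y).deriv]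
    rw [interior_Ici] at hy
    exact hf' y (le_of_lt hy)
  have := hmono Set.self_mem_Ici hx hx
  simpa [h0] using this

lemma lemA : ∀ x : ℝ, 0 ≤ x → exp x ≤ (2 + x ^ 2) * exp (x ^ 2 / 4) := by
  intro x hx
  rcases le_or_gt x 4 with h4 | h4
  · set t := x - x ^ 2 / 4 with ht
    have ht0 : 0 ≤ t := by rw [ht]; nlinarith
    have ht1 : t ≤ 1 := by rw [ht]; nlinarith [sq_nonneg (x - 2)]
    have chord : exp t ≤ 1 + (exp 1 - 1) * t := by
      have h := convexOn_exp.2 (Set.mem_univ (0:ℝ)) (Set.mem_univ (1:ℝ))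
        (show (0:ℝ) ≤ 1 - t by linarith) ht0 (by ring)
      simp only [smul_eq_mul, mul_zero, mul_one, zero_add, exp_zero] at h
      linarith
    have he : exp 1 - 1 ≤ 2 := by
      have := Real.exp_one_lt_d9
      linarith
    have h1 : exp t ≤ 2 + x ^ 2 := by
      have h2 : (exp 1 - 1) * t ≤ 2 * t := by nlinarith
      have h3 : t ≤ x := by rw [ht]; nlinarith
      nlinarith
    calc exp x = exp t * exp (x ^ 2 / 4) := by rw [← Real.exp_add, ht]; ring_nf
      _ ≤ (2 + x ^ 2) * exp (x ^ 2 / 4) := by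
          have := Real.exp_pos (x ^ 2 / 4); nlinarith [Real.exp_pos t]
  · have h1 : x ≤ x ^ 2 / 4 := by nlinarith
    have h2 : exp x ≤ exp (x ^ 2 / 4) := Real.exp_le_exp.2 h1
    nlinarith [Real.exp_pos (x ^ 2 / 4), sq_nonneg x]

lemma lemB : ∀ x : ℝ, 0 ≤ x → exp x - 1 ≤ 2 * x * exp (x ^ 2 / 4) := by
  intro x hx
  have key := nonneg_of_deriv (f := fun x => 2 * x * exp (x ^ 2 / 4) - exp x + 1)
    (f' := fun x => (2 + x ^ 2) * exp (x ^ 2 / 4) - exp x) ?_ (by norm_num) ?_ x hx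
  · linarith
  · intro y
    have h1 : HasDerivAt (fun x : ℝ => x ^ 2 / 4) (y / 2) y := by
      have := ((hasDerivAt_pow 2 y).div_const 4)
      simpa using this.congr_deriv (by ring)
    have h2 : HasDerivAt (fun x : ℝ => exp (x ^ 2 / 4)) (exp (y ^ 2 / 4) * (y / 2)) y := h1.exp
    have h3 : HasDerivAt (fun x : ℝ => 2 * x) 2 y := by
      simpa using (hasDerivAt_id y).const_mul 2
    have h4 := (h3.mul h2)
    have h5 := (h4.sub (Real.hasDerivAt_exp y)).add_const 1
    exact h5.congr_deriv (by beta_reduce; ring)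
  · intro y hy
    have := lemA y hy
    linarith

lemma lemC : ∀ x : ℝ, 0 ≤ x → exp x - 1 - x ≤ 4 * (exp (x ^ 2 / 4) - 1) := by
  intro x hx
  have key := nonneg_of_deriv (f := fun x => 4 * (exp (x ^ 2 / 4) - 1) - (exp x - 1 - x))
    (f' := fun x => 2 * x * exp (x ^ 2 / 4) - exp x + 1) ?_ (by norm_num) ?_ x hx
  · linarith
  · intro y
    have h1 : HasDerivAt (fun x : ℝ => x ^ 2 / 4) (y / 2) y := by
      have := ((hasDerivAt_pow 2 y).div_const 4)
      simpa using this.congr_deriv (by ring)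
    have h2 : HasDerivAt (fun x : ℝ => exp (x ^ 2 / 4)) (exp (y ^ 2 / 4) * (y / 2)) y := h1.exp
    have h3 := ((h2.sub_const 1).const_mul 4).sub
      (((Real.hasDerivAt_exp y).sub_const 1).sub (hasDerivAt_id y))
    exact h3.congr_deriv (by beta_reduce; ring)
  · intro y hy
    have := lemB y hy
    linarith

lemma lemD {p : ℝ} (hp0 : 0 ≤ p) (hp1 : p ≤ 1) :
    ∀ h : ℝ, 0 ≤ h →
      (1 - p) * exp (-p * h) + p * exp ((1 - p) * h) ≤ 1 + (exp h - 1 - h) / 4 := by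
  intro h hh
  have key := nonneg_of_deriv
    (f := fun h => 1 + (exp h - 1 - h) / 4 - ((1 - p) * exp (-p * h) + p * exp ((1 - p) * h)))
    (f' := fun h => (exp h - 1) / 4 - p * (1 - p) * (exp ((1 - p) * h) - exp (-p * h)))
    ?_ (by norm_num) ?_ h hh
  · linarith
  · intro y
    have g1 : HasDerivAt (fun h : ℝ => -p * h) (-p) y := by
      simpa using (hasDerivAt_id y).const_mul (-p)
    have g2 : HasDerivAt (fun h : ℝ => (1 - p) * h) (1 - p) y := by
      simpa using (hasDerivAt_id y).const_mul (1 - p)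
    have h1 : HasDerivAt (fun h : ℝ => exp (-p * h)) (exp (-p * y) * (-p)) y := g1.exp
    have h2 : HasDerivAt (fun h : ℝ => exp ((1 - p) * h)) (exp ((1 - p) * y) * (1 - p)) y := g2.exp
    have h3 := ((((Real.hasDerivAt_exp y).sub_const 1).sub (hasDerivAt_id y)).div_const 4).const_add 1
    have h4 := h3.sub ((h1.const_mul (1 - p)).add (h2.const_mul p))
    exact h4.congr_deriv (by beta_reduce; ring)
  · intro y hy
    have e1 : exp ((1 - p) * y) - exp (-p * y) = exp (-p * y) * (exp y - 1) := by
      rw [mul_sub, ← Real.exp_add]; ring_nf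
    have e2 : exp (-p * y) ≤ 1 := by
      rw [Real.exp_le_one_iff]
      nlinarith
    have e3 : (0:ℝ) ≤ exp y - 1 := by nlinarith [Real.exp_pos y, Real.one_le_exp hy]
    have e4 : p * (1 - p) ≤ 1 / 4 := by nlinarith [sq_nonneg (2 * p - 1)]
    have e5 : exp ((1 - p) * y) - exp (-p * y) ≤ exp y - 1 := by
      rw [e1]; nlinarith [Real.exp_pos (-p * y)]
    have e6 : 0 ≤ exp ((1 - p) * y) - exp (-p * y) := by
      rw [e1]; positivity
    nlinarith [mul_nonneg (mul_nonneg hp0 (by linarith : (0:ℝ) ≤ 1 - p)) e6]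

lemma lemD' {p : ℝ} (hp0 : 0 ≤ p) (hp1 : p ≤ 1) (h : ℝ) :
    (1 - p) * exp (-p * h) + p * exp ((1 - p) * h) ≤ exp (h ^ 2 / 4) := by
  rcases le_or_gt 0 h with hh | hh
  · have := lemD hp0 hp1 h hh
    have := lemC h hh
    linarith
  · have h1 := lemD (p := 1 - p) (by linarith) (by linarith) (-h) (by linarith)
    have h2 := lemC (-h) (by linarith)
    have e : (1 - (1 - p)) * exp (-(1 - p) * -h) + (1 - p) * exp ((1 - (1 - p)) * -h)
        = (1 - p) * exp (-p * h) + p * exp ((1 - p) * h) := by ring_nf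
    rw [e] at h1
    have e2 : (-h) ^ 2 = h ^ 2 := by ring
    rw [e2] at h2
    linarith

lemma hoeffding_mgf {Ω : Type*} [MeasurableSpace Ω] {μ : Measure Ω} [IsProbabilityMeasure μ]
    {X : Ω → ℝ} (hX : Measurable X) {a b : ℝ} (hab : a < b)
    (hbd : ∀ᵐ ω ∂μ, a ≤ X ω ∧ X ω ≤ b) (l : ℝ) :
    mgf X μ l ≤ exp (l * (∫ ω, X ω ∂μ) + l ^ 2 * (b - a) ^ 2 / 4) := by
  have hba : (0:ℝ) < b - a := by linarith
  -- integrability of X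
  have hXint : Integrable X μ := by
    refine (integrable_const (|a| + |b|)).mono' hX.aestronglyMeasurable ?_
    filter_upwards [hbd] with ω hω
    rw [Real.norm_eq_abs, abs_le]
    constructor <;> [skip; skip] <;> cases' abs_cases a with h h <;> cases' abs_cases b with h' h' <;> nlinarith [hω.1, hω.2]
  set m := ∫ ω, X ω ∂μ with hm
  have ham : a ≤ m := by
    have : ∫ _ω, a ∂μ ≤ ∫ ω, X ω ∂μ :=
      integral_mono_ae (integrable_const a) hXint (by filter_upwards [hbd] with ω hω using hω.1)
    simpa using this
  have hmb : m ≤ b := by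
    have : ∫ ω, X ω ∂μ ≤ ∫ _ω, b ∂μ :=
      integral_mono_ae hXint (integrable_const b) (by filter_upwards [hbd] with ω hω using hω.2)
    simpa using this
  set C : ℝ := (b * exp (l * a) - a * exp (l * b)) / (b - a) with hC
  set D : ℝ := (exp (l * b) - exp (l * a)) / (b - a) with hD
  -- pointwise chord bound
  have chord : ∀ x : ℝ, a ≤ x → x ≤ b → exp (l * x) ≤ C + D * x := by
    intro x hax hxb
    have hw1 : (0:ℝ) ≤ (b - x) / (b - a) := div_nonneg (by linarith) hba.le
    have hw2 : (0:ℝ) ≤ (x - a) / (b - a) := div_nonneg (by linarith) hba.le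
    have hsum : (b - x) / (b - a) + (x - a) / (b - a) = 1 := by field_simp; ring
    have h := convexOn_exp.2 (Set.mem_univ (l * a)) (Set.mem_univ (l * b)) hw1 hw2 hsum
    simp only [smul_eq_mul] at h
    have e1 : (b - x) / (b - a) * (l * a) + (x - a) / (b - a) * (l * b) = l * x := by
      field_simp; ring
    rw [e1] at h
    refine h.trans (le_of_eq ?_)
    rw [hC, hD]
    field_simp
    ring
  -- integrability of exp (l * X)
  have hexpint : Integrable (fun ω => exp (l * X ω)) μ := by
    refine (integrable_const (exp (|l| * (|a| + |b|)))).mono'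
      ((hX.const_mul l).exp.aestronglyMeasurable) ?_
    filter_upwards [hbd] with ω hω
    rw [Real.norm_eq_abs, abs_of_pos (Real.exp_pos _), Real.exp_le_exp]
    have hXa : |X ω| ≤ |a| + |b| := by
      rw [abs_le]; constructor <;> cases' abs_cases a with h h <;> cases' abs_cases b with h' h' <;>
        nlinarith [hω.1, hω.2]
    calc l * X ω ≤ |l * X ω| := le_abs_self _
      _ = |l| * |X ω| := abs_mul _ _
      _ ≤ |l| * (|a| + |b|) := by
          exact mul_le_mul_of_nonneg_left hXa (abs_nonneg l)
  -- integrate the chord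
  have step1 : mgf X μ l ≤ C + D * m := by
    have hint2 : Integrable (fun ω => C + D * X ω) μ :=
      (integrable_const C).add (hXint.const_mul D)
    have := integral_mono_ae hexpint hint2
      (by filter_upwards [hbd] with ω hω using chord (X ω) hω.1 hω.2)
    rw [integral_add (integrable_const C) (hXint.const_mul D), integral_const,
      integral_const_mul] at this
    simpa [mgf, hm] using this
  -- rewrite as two-point mgf
  set p : ℝ := (m - a) / (b - a) with hp
  have hp0 : 0 ≤ p := div_nonneg (by linarith) hba.le
  have hp1 : p ≤ 1 := by rw [hp, div_le_one hba]; linarith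
  set h : ℝ := l * (b - a) with hh
  have step2 : C + D * m = exp (l * m) * ((1 - p) * exp (-p * h) + p * exp ((1 - p) * h)) := by
    have e1 : -p * h = l * a - l * m := by
      rw [hp, hh]; field_simp; ring
    have e2 : (1 - p) * h = l * b - l * m := by
      rw [hp, hh]; field_simp; ring
    rw [e1, e2, Real.exp_sub, Real.exp_sub, hC, hD, hp]
    field_simp
    ring
  have step3 := lemD' hp0 hp1 h
  calc mgf X μ l ≤ C + D * m := step1
    _ = exp (l * m) * ((1 - p) * exp (-p * h) + p * exp ((1 - p) * h)) := step2
    _ ≤ exp (l * m) * exp (h ^ 2 / 4) := by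
        exact mul_le_mul_of_nonneg_left step3 (Real.exp_pos _).le
    _ = exp (l * m + l ^ 2 * (b - a) ^ 2 / 4) := by
        rw [← Real.exp_add, hh]; ring_nf

lemma integrable_exp_of_bdd {Ω : Type*} [MeasurableSpace Ω] {μ : Measure Ω}
    [IsProbabilityMeasure μ] {X : Ω → ℝ} (hX : Measurable X) {a b : ℝ}
    (hbd : ∀ᵐ ω ∂μ, a ≤ X ω ∧ X ω ≤ b) (l : ℝ) :
    Integrable (fun ω => Real.exp (l * X ω)) μ := by
  refine (integrable_const (Real.exp (|l| * (|a| + |b|)))).mono'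
    ((hX.const_mul l).exp.aestronglyMeasurable) ?_
  filter_upwards [hbd] with ω hω
  rw [Real.norm_eq_abs, abs_of_pos (Real.exp_pos _), Real.exp_le_exp]
  have hXa : |X ω| ≤ |a| + |b| := by
    rw [abs_le]; constructor <;> cases' abs_cases a with h h <;> cases' abs_cases b with h' h' <;>
      nlinarith [hω.1, hω.2]
  calc l * X ω ≤ |l * X ω| := le_abs_self _
    _ = |l| * |X ω| := abs_mul _ _
    _ ≤ |l| * (|a| + |b|) := mul_le_mul_of_nonneg_left hXa (abs_nonneg l)

end Aux

set_option maxHeartbeats 1000000 in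
/-- Proposition 3 of the paper (with ν = 1): the two deterministic inequalities
under-approximate the feasible domain of the retailer's chance constraint
`ℙ(0 ≤ g ≤ ḡ) ≥ 1 − δ` on the total power exchange `g = Σ_{j<N} d_j − Σ_{j<N} u_j`. -/
theorem power_exchange_chance_constraint_under_approximation
    {Ω : Type*} [MeasurableSpace Ω] (μ : Measure Ω) [IsProbabilityMeasure μ]
    (N : ℕ) (hN : 1 ≤ N)
    (d : ℕ → Ω → ℝ) (c f : ℕ → ℝ)
    (hmeas : ∀ j < N, Measurable (d j))
    (hindep : iIndepFun (fun j : Fin N => d j.val) μ)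
    (hbdd : ∀ j < N, ∀ᵐ ω ∂μ, c j ≤ d j ω ∧ d j ω ≤ f j)
    (hcf : ∀ j < N, c j < f j)
    (u : ℕ → ℝ) (gbar δ δt : ℝ)
    (hgbar : 0 < gbar)
    (hδt0 : 0 < δt) (hδt1 : δt ≤ 1)
    (hδδt0 : 0 < δ - δt) (hδδt1 : δ - δt ≤ 1)
    (g : Ω → ℝ)
    (hg : ∀ ω, g ω = ∑ j ∈ range N, d j ω - ∑ j ∈ range N, u j)
    (hineq₁ : ∑ j ∈ range N, u j - ∑ j ∈ range N, ∫ ω, d j ω ∂μ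
        + Real.sqrt (-(∑ j ∈ range N, (f j - c j) ^ 2) * Real.log δt) ≤ 0)
    (hineq₂ : -gbar + ∑ j ∈ range N, ∫ ω, d j ω ∂μ - ∑ j ∈ range N, u j
        + Real.sqrt (-(∑ j ∈ range N, (f j - c j) ^ 2) * Real.log (δ - δt)) ≤ 0) :
    1 - δ ≤ (μ {ω | 0 ≤ g ω ∧ g ω ≤ gbar}).toReal := by
  classical
  set V : ℝ := ∑ j ∈ range N, (f j - c j) ^ 2 with hV
  set m : ℝ := ∑ j ∈ range N, ∫ ω, d j ω ∂μ with hm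
  set U : ℝ := ∑ j ∈ range N, u j with hU
  set S : Ω → ℝ := fun ω => ∑ j ∈ range N, d j ω with hS
  have hVpos : 0 < V := by
    refine Finset.sum_pos (fun j hj => ?_) ⟨0, Finset.mem_range.2 hN⟩
    have := hcf j (Finset.mem_range.1 hj)
    have h1 : 0 < f j - c j := by linarith
    positivity
  have hVne : V ≠ 0 := ne_of_gt hVpos
  have hSmeas : Measurable S :=
    Finset.measurable_sum _ (fun j hj => hmeas j (Finset.mem_range.1 hj))
  -- a.e. bounds on S
  have hbddS : ∀ᵐ ω ∂μ, (∑ j ∈ range N, c j) ≤ S ω ∧ S ω ≤ ∑ j ∈ range N, f j := by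
    have hb : ∀ᵐ ω ∂μ, ∀ i : Fin N, c i.val ≤ d i.val ω ∧ d i.val ω ≤ f i.val :=
      ae_all_iff.2 fun i => hbdd i.val i.isLt
    filter_upwards [hb] with ω hω
    constructor
    · exact Finset.sum_le_sum fun j hj => (hω ⟨j, Finset.mem_range.1 hj⟩).1
    · exact Finset.sum_le_sum fun j hj => (hω ⟨j, Finset.mem_range.1 hj⟩).2
  -- mgf bound for S
  have hSmgf : ∀ l : ℝ, mgf S μ l ≤ Real.exp (l * m + l ^ 2 * V / 4) := by
    intro l
    have hSeq : S = ∑ i : Fin N, (fun j : Fin N => d j.val) i := by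
      funext ω
      rw [hS]
      simp only [Finset.sum_apply]
      exact (Fin.sum_univ_eq_sum_range (fun j => d j ω) N).symm
    rw [hSeq, hindep.mgf_sum (fun i => hmeas i.val i.isLt)]
    calc ∏ i : Fin N, mgf (d i.val) μ l
        ≤ ∏ i : Fin N, Real.exp (l * (∫ ω, d i.val ω ∂μ) + l ^ 2 * (f i.val - c i.val) ^ 2 / 4) :=
          Finset.prod_le_prod (fun i _ => mgf_nonneg)
            (fun i _ => hoeffding_mgf (hmeas i.val i.isLt) (hcf i.val i.isLt)
              (hbdd i.val i.isLt) l)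
      _ = Real.exp (∑ i : Fin N,
            (l * (∫ ω, d i.val ω ∂μ) + l ^ 2 * (f i.val - c i.val) ^ 2 / 4)) :=
          (Real.exp_sum _ _).symm
      _ = Real.exp (l * m + l ^ 2 * V / 4) := by
          congr 1
          have e1 := Fin.sum_univ_eq_sum_range (fun j => ∫ ω, d j ω ∂μ) N
          have e2 := Fin.sum_univ_eq_sum_range (fun j => (f j - c j) ^ 2) N
          have e3 : ∑ i : Fin N, l ^ 2 * (f i.val - c i.val) ^ 2 / 4 = l ^ 2 * V / 4 := by
            rw [hV, ← e2, ← Finset.sum_div, ← Finset.mul_sum]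
          rw [Finset.sum_add_distrib, ← Finset.mul_sum, e1, ← hm, e3]
  have hintS : ∀ l : ℝ, Integrable (fun ω => Real.exp (l * S ω)) μ :=
    fun l => integrable_exp_of_bdd hSmeas hbddS l
  -- the two tail quantities
  set t₁ : ℝ := m - U with ht₁
  set t₂ : ℝ := gbar - m + U with ht₂
  have hs₁ : Real.sqrt (-V * Real.log δt) ≤ t₁ := by rw [ht₁]; linarith
  have hs₂ : Real.sqrt (-V * Real.log (δ - δt)) ≤ t₂ := by rw [ht₂]; linarith
  have ht₁0 : 0 ≤ t₁ := (Real.sqrt_nonneg _).trans hs₁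
  have ht₂0 : 0 ≤ t₂ := (Real.sqrt_nonneg _).trans hs₂
  have hlog₁ : -V * Real.log δt ≤ t₁ ^ 2 := by
    have h0 : 0 ≤ -V * Real.log δt := by
      have : Real.log δt ≤ 0 := Real.log_nonpos hδt0.le hδt1
      nlinarith
    calc -V * Real.log δt = Real.sqrt (-V * Real.log δt) ^ 2 := (Real.sq_sqrt h0).symm
      _ ≤ t₁ ^ 2 := by nlinarith [Real.sqrt_nonneg (-V * Real.log δt)]
  have hlog₂ : -V * Real.log (δ - δt) ≤ t₂ ^ 2 := by
    have h0 : 0 ≤ -V * Real.log (δ - δt) := by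
      have : Real.log (δ - δt) ≤ 0 := Real.log_nonpos hδδt0.le hδδt1
      nlinarith
    calc -V * Real.log (δ - δt) = Real.sqrt (-V * Real.log (δ - δt)) ^ 2 := (Real.sq_sqrt h0).symm
      _ ≤ t₂ ^ 2 := by nlinarith [Real.sqrt_nonneg (-V * Real.log (δ - δt))]
  -- Chernoff lower tail
  have hA : (μ {ω | S ω ≤ m - t₁}).toReal ≤ δt := by
    set l : ℝ := -(2 * t₁ / V) with hl
    have hl0 : l ≤ 0 := by
      rw [hl]
      have : 0 ≤ 2 * t₁ / V := by positivity
      linarith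
    calc (μ {ω | S ω ≤ m - t₁}).toReal
        ≤ Real.exp (-l * (m - t₁)) * mgf S μ l :=
          measure_le_le_exp_mul_mgf (m - t₁) hl0 (hintS l)
      _ ≤ Real.exp (-l * (m - t₁)) * Real.exp (l * m + l ^ 2 * V / 4) :=
          mul_le_mul_of_nonneg_left (hSmgf l) (Real.exp_pos _).le
      _ = Real.exp (-(t₁ ^ 2) / V) := by
          rw [← Real.exp_add]
          congr 1
          have e : -l * (m - t₁) + (l * m + l ^ 2 * V / 4) = l * t₁ + l ^ 2 * V / 4 := by ring
          rw [e, hl]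
          field_simp
          ring
      _ ≤ δt := by
          rw [← Real.exp_log hδt0, Real.exp_le_exp, div_le_iff₀ hVpos]
          nlinarith
  -- Chernoff upper tail
  have hB : (μ {ω | m + t₂ ≤ S ω}).toReal ≤ δ - δt := by
    set l : ℝ := 2 * t₂ / V with hl
    have hl0 : 0 ≤ l := by positivity
    calc (μ {ω | m + t₂ ≤ S ω}).toReal
        ≤ Real.exp (-l * (m + t₂)) * mgf S μ l :=
          measure_ge_le_exp_mul_mgf (m + t₂) hl0 (hintS l)
      _ ≤ Real.exp (-l * (m + t₂)) * Real.exp (l * m + l ^ 2 * V / 4) :=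
          mul_le_mul_of_nonneg_left (hSmgf l) (Real.exp_pos _).le
      _ = Real.exp (-(t₂ ^ 2) / V) := by
          rw [← Real.exp_add]
          congr 1
          have e : -l * (m + t₂) + (l * m + l ^ 2 * V / 4) = -(l * t₂) + l ^ 2 * V / 4 := by ring
          rw [e, hl]
          field_simp
          ring
      _ ≤ δ - δt := by
          rw [← Real.exp_log hδδt0, Real.exp_le_exp, div_le_iff₀ hVpos]
          nlinarith
  -- combine
  have hgm : Measurable g := by
    have : g = fun ω => S ω - U := funext hg
    rw [this]
    exact hSmeas.sub measurable_const
  have hGmeas : MeasurableSet {ω | 0 ≤ g ω ∧ g ω ≤ gbar} := by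
    have : {ω | 0 ≤ g ω ∧ g ω ≤ gbar} = {ω | 0 ≤ g ω} ∩ {ω | g ω ≤ gbar} := rfl
    rw [this]
    exact (measurableSet_le measurable_const hgm).inter (measurableSet_le hgm measurable_const)
  have hsub : {ω | 0 ≤ g ω ∧ g ω ≤ gbar}ᶜ ⊆ {ω | S ω ≤ m - t₁} ∪ {ω | m + t₂ ≤ S ω} := by
    intro ω hω
    simp only [Set.mem_compl_iff, Set.mem_setOf_eq, not_and_or, not_le] at hω
    rcases hω with hω | hω
    · left
      have := hg ω
      simp only [Set.mem_setOf_eq]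
      rw [ht₁]
      have : S ω - U < 0 := by rw [hS, hU]; rw [hg ω] at hω; linarith [hω]
      linarith
    · right
      simp only [Set.mem_setOf_eq]
      have : gbar < S ω - U := by rw [hS, hU]; rw [hg ω] at hω; linarith [hω]
      rw [ht₂] at *
      linarith
  have hcompl : (μ {ω | 0 ≤ g ω ∧ g ω ≤ gbar}ᶜ).toReal ≤ δ := by
    have h1 : μ {ω | 0 ≤ g ω ∧ g ω ≤ gbar}ᶜ ≤
        μ {ω | S ω ≤ m - t₁} + μ {ω | m + t₂ ≤ S ω} :=
      (measure_mono hsub).trans (measure_union_le _ _)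
    have h2 : (μ {ω | 0 ≤ g ω ∧ g ω ≤ gbar}ᶜ).toReal ≤
        (μ {ω | S ω ≤ m - t₁}).toReal + (μ {ω | m + t₂ ≤ S ω}).toReal := by
      rw [← ENNReal.toReal_add (measure_ne_top μ _) (measure_ne_top μ _)]
      exact ENNReal.toReal_mono
        (ENNReal.add_ne_top.2 ⟨measure_ne_top μ _, measure_ne_top μ _⟩) h1
    linarith
  have hfin : (μ {ω | 0 ≤ g ω ∧ g ω ≤ gbar}ᶜ).toReal
      = 1 - (μ {ω | 0 ≤ g ω ∧ g ω ≤ gbar}).toReal := by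
    rw [prob_compl_eq_one_sub hGmeas,
      ENNReal.toReal_sub_of_le prob_le_one ENNReal.one_ne_top, ENNReal.toReal_one]
  linarith
end

section
/- Suppose that for every t ∈ {1,…,τ} the two inequalities (i_t) x̲ − x₀ − ρ·Σ_{k=0}^{t−1} E[r_k] + ρ·Σ_{k=0}^{t−1} Σ_{j=1}^{N} u_{j,k} + sqrt( −ρ² · (Σ_{k=0}^{t−1} (b_k − a_k)²) · ln δ̃_x ) ≤ 0 and (ii_t) x₀ − x̄ + ρ·Σ_{k=0}^{t−1} E[r_k] − ρ·Σ_{k=0}^{t−1} Σ_{j=1}^{N} u_{j,k} + sqrt( −ρ² · (Σ_{k=0}^{t−1} (b_k − a_k)²) · ln (δ_x − δ̃_x) ) ≤ 0 hold; that the two terminal inequalities r − ε − x₀ − ρ·Σ_{k=0}^{τ−1} E[r_k] + ρ·Σ_{k=0}^{τ−1} Σ_{j=1}^{N} u_{j,k} + sqrt( −ρ²·(Σ_{k=0}^{τ−1}(b_k−a_k)²)·ln δ̃_f ) ≤ 0 and x₀ − r − ε + ρ·Σ_{k=0}^{τ−1} E[r_k] − ρ·Σ_{k=0}^{τ−1}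 Σ_{j=1}^{N} u_{j,k} + sqrt( −ρ²·(Σ_{k=0}^{τ−1}(b_k−a_k)²)·ln (δ_f − δ̃_f) ) ≤ 0 hold; and that for every t ∈ {0,…,τ−1} the two inequalities Σ_{j=1}^{N} u_{j,t} − Σ_{j=1}^{N} E[d_{j,t}] + sqrt( −(Σ_{j=1}^{N}(f_{j,t}−c_{j,t})²)·ln δ̃_g ) ≤ 0 and −ḡ + Σ_{j=1}^{N} E[d_{j,t}] − Σ_{j=1}^{N} u_{j,t} + sqrt( −(Σ_{j=1}^{N}(f_{j,t}−c_{j,t})²)·ln (δ_g − δ̃_g) ) ≤ 0 hold. Then all the chance constraints of the original game hold, namely: ℙ( x̲ ≤ x_t ≤ x̄ ) ≥ 1 − δ_x for every t ∈ {1,…,τ}, ℙ( |x_τ − r| ≤ ε ) ≥ 1 − δ_f, and ℙ( 0 ≤ g_t ≤ ḡ ) ≥ 1 − δ_g for every t ∈ {0,…,τ−1}. -/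
open MeasureTheory ProbabilityTheory Finset

namespace HoeffdingAux
open Real


lemma Dpos {p : ℝ} (hp0 : 0 ≤ p) (hp1 : p ≤ 1) (x : ℝ) : 0 < 1 - p + p * Real.exp x := by
  rcases le_or_gt 1 (Real.exp x) with h | h
  · nlinarith
  · nlinarith [Real.exp_pos x]

lemma core_log_ineq {p : ℝ} (hp0 : 0 ≤ p) (hp1 : p ≤ 1) (h : ℝ) :
    Real.log (1 - p + p * Real.exp h) ≤ p * h + h ^ 2 / 4 := by
  set D : ℝ → ℝ := fun x => 1 - p + p * Real.exp x with hD
  have hDpos : ∀ x, 0 < D x := fun x => Dpos hp0 hp1 x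
  have hDder : ∀ x, HasDerivAt D (p * Real.exp x) x := by
    intro x
    exact ((Real.hasDerivAt_exp x).const_mul p).const_add (1 - p)
  set f₁ : ℝ → ℝ := fun x => p + x / 2 - p * Real.exp x / D x with hf₁
  set f : ℝ → ℝ := fun x => p * x + x ^ 2 / 4 - Real.log (D x) with hf
  have hfder : ∀ x, HasDerivAt f (f₁ x) x := by
    intro x
    have h1 : HasDerivAt (fun x : ℝ => p * x) p x := by
      simpa using (hasDerivAt_id x).const_mul p
    have h2 : HasDerivAt (fun x : ℝ => x ^ 2 / 4) (x / 2) x := by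
      have := (hasDerivAt_pow 2 x).div_const 4
      simpa [pow_one] using this.congr_deriv (by ring)
    have h3 : HasDerivAt (fun x => Real.log (D x)) (p * Real.exp x / D x) x := by
      have := (Real.hasDerivAt_log (hDpos x).ne').comp x (hDder x)
      exact this.congr_deriv (by rw [div_eq_inv_mul])
    exact (h1.add h2).sub h3
  have hf₁der : ∀ x, HasDerivAt f₁ (1 / 2 - p * Real.exp x * (1 - p) / (D x) ^ 2) x := by
    intro x
    have hq : HasDerivAt (fun x => p * Real.exp x / D x)
        ((p * Real.exp x * D x - p * Real.exp x * (p * Real.exp x)) / (D x) ^ 2) x :=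
      ((Real.hasDerivAt_exp x).const_mul p).div (hDder x) (hDpos x).ne'
    have h1 : HasDerivAt (fun x : ℝ => p + x / 2) (1 / 2) x := by
      simpa using ((hasDerivAt_id x).div_const 2).const_add p
    have := h1.sub hq
    have harith : p * Real.exp x * D x - p * Real.exp x * (p * Real.exp x)
        = p * Real.exp x * (1 - p) := by simp only [hD]; ring
    rw [harith] at this; exact this
  have hf₁nonneg : ∀ x, 0 ≤ 1 / 2 - p * Real.exp x * (1 - p) / (D x) ^ 2 := by
    intro x
    have hD' : 0 < D x := hDpos x
    have hE : p * Real.exp x * (1 - p) = (p * Real.exp x) * (D x - p * Real.exp x) := by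
      simp only [hD]; ring
    have key : ∀ Dx E : ℝ, E * (Dx - E) ≤ Dx ^ 2 / 4 := by
      intro Dx E; nlinarith [sq_nonneg (Dx - 2 * E)]
    have hkey : (p * Real.exp x) * (D x - p * Real.exp x) ≤ (D x) ^ 2 / 4 := key _ _
    rw [hE, sub_nonneg, div_le_iff₀ (by positivity)]
    nlinarith [sq_nonneg (D x)]
  have hf₁mono : Monotone f₁ := by
    apply monotone_of_deriv_nonneg
    · exact fun x => (hf₁der x).differentiableAt
    · intro x
      rw [(hf₁der x).deriv]
      exact hf₁nonneg x
  have hf₁zero : f₁ 0 = 0 := by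
    simp only [hf₁, hD]
    rw [Real.exp_zero]
    field_simp
    ring
  have hfdiff : Differentiable ℝ f := fun x => (hfder x).differentiableAt
  have hf0 : f 0 = 0 := by simp [hf, hD]
  have hge : ∀ x, 0 ≤ f x := by
    intro x
    rcases le_or_gt 0 x with hx | hx
    · have := monotoneOn_of_deriv_nonneg (convex_Ici (0:ℝ)) hfdiff.continuous.continuousOn
        hfdiff.differentiableOn (fun y hy => by
          rw [(hfder y).deriv]
          have hy0 : (0:ℝ) ≤ y := le_of_lt (by simpa using hy)
          calc (0:ℝ) = f₁ 0 := hf₁zero.symm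
            _ ≤ f₁ y := hf₁mono hy0)
      have := this (Set.mem_Ici.2 le_rfl) (Set.mem_Ici.2 hx) hx
      linarith [hf0 ▸ this]
    · have := antitoneOn_of_deriv_nonpos (convex_Iic (0:ℝ)) hfdiff.continuous.continuousOn
        hfdiff.differentiableOn (fun y hy => by
          rw [(hfder y).deriv]
          have hy0 : y ≤ (0:ℝ) := le_of_lt (by simpa using hy)
          calc f₁ y ≤ f₁ 0 := hf₁mono hy0
            _ = 0 := hf₁zero)
      have := this (Set.mem_Iic.2 hx.le) (Set.mem_Iic.2 le_rfl) hx.le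
      linarith [hf0 ▸ this]
    
  have := hge h
  simp only [hf] at this
  linarith

section Aux
variable {Ω : Type*} [MeasurableSpace Ω] {μ : Measure Ω} [IsProbabilityMeasure μ]



lemma integrable_of_ae_bdd {X : Ω → ℝ} (hX : Measurable X) {C : ℝ}
    (h : ∀ᵐ ω ∂μ, |X ω| ≤ C) : Integrable X μ := by
  refine Integrable.mono' (integrable_const C) hX.aestronglyMeasurable ?_
  simpa [Real.norm_eq_abs] using h

lemma mgf_centered_le (X : Ω → ℝ) (hX : Measurable X) (A B : ℝ) (hAB : A < B)
    (hbdd : ∀ᵐ ω ∂μ, A ≤ X ω ∧ X ω ≤ B) (t : ℝ) :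
    mgf (fun ω => X ω - ∫ ω, X ω ∂μ) μ t ≤ Real.exp (t ^ 2 * (B - A) ^ 2 / 4) := by
  have hint : Integrable X μ := by
    refine integrable_of_ae_bdd hX (C := max |A| |B|) ?_
    filter_upwards [hbdd] with ω ⟨h1, h2⟩ using abs_le_max_abs_abs h1 h2
  set m : ℝ := ∫ ω, X ω ∂μ with hm
  have hmA : A ≤ m := by
    have := integral_mono_ae (integrable_const A) hint (by filter_upwards [hbdd] with ω h using h.1)
    simpa using this
  have hmB : m ≤ B := by
    have := integral_mono_ae hint (integrable_const B) (by filter_upwards [hbdd] with ω h using h.2)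
    simpa using this
  set p : ℝ := (m - A) / (B - A) with hp
  have hBA : (0:ℝ) < B - A := by linarith
  have hp0 : 0 ≤ p := div_nonneg (by linarith) hBA.le
  have hp1 : p ≤ 1 := (div_le_one hBA).2 (by linarith)
  -- pointwise convexity bound
  have hconv : ∀ᵐ ω ∂μ, Real.exp (t * (X ω - m)) ≤
      (B - X ω) / (B - A) * Real.exp (t * (A - m))
      + (X ω - A) / (B - A) * Real.exp (t * (B - m)) := by
    filter_upwards [hbdd] with ω ⟨h1, h2⟩
    have hw1 : 0 ≤ (B - X ω) / (B - A) := div_nonneg (by linarith) hBA.le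
    have hw2 : 0 ≤ (X ω - A) / (B - A) := div_nonneg (by linarith) hBA.le
    have hw : (B - X ω) / (B - A) + (X ω - A) / (B - A) = 1 := by field_simp; ring
    have hcv := convexOn_exp.2 (Set.mem_univ (t * (A - m))) (Set.mem_univ (t * (B - m)))
      hw1 hw2 hw
    simp only [smul_eq_mul] at hcv
    have harg : (B - X ω) / (B - A) * (t * (A - m)) + (X ω - A) / (B - A) * (t * (B - m))
        = t * (X ω - m) := by
      rw [div_mul_eq_mul_div, div_mul_eq_mul_div, ← add_div, eq_comm,
        eq_div_iff hBA.ne']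
      ring
    rw [harg] at hcv
    exact hcv
  -- integrate
  have hintL : Integrable (fun ω => Real.exp (t * (X ω - m))) μ := by
    refine integrable_of_ae_bdd (by fun_prop) (C := Real.exp (|t| * (|A - m| + |B - m|))) ?_
    filter_upwards [hbdd] with ω ⟨h1, h2⟩
    rw [abs_of_pos (Real.exp_pos _), Real.exp_le_exp]
    have habs : |X ω - m| ≤ |A - m| + |B - m| := by
      have := abs_le_max_abs_abs (sub_le_sub_right h1 m) (sub_le_sub_right h2 m)
      have h3 := le_max_iff.1 this
      rcases h3 with h3 | h3 <;> [linarith [abs_nonneg (B - m)]; linarith [abs_nonneg (A - m)]]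
    calc t * (X ω - m) ≤ |t * (X ω - m)| := le_abs_self _
      _ = |t| * |X ω - m| := abs_mul _ _
      _ ≤ |t| * (|A - m| + |B - m|) := by
          exact mul_le_mul_of_nonneg_left habs (abs_nonneg t)
  have int1 : Integrable (fun ω => (B - X ω) / (B - A) * Real.exp (t * (A - m))) μ :=
    (((integrable_const B).sub hint).div_const _).mul_const _
  have int2 : Integrable (fun ω => (X ω - A) / (B - A) * Real.exp (t * (B - m))) μ :=
    ((hint.sub (integrable_const A)).div_const _).mul_const _
  have hintR : Integrable (fun ω =>
      (B - X ω) / (B - A) * Real.exp (t * (A - m))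
      + (X ω - A) / (B - A) * Real.exp (t * (B - m))) μ := int1.add int2
  have hstep : mgf (fun ω => X ω - m) μ t ≤
      (B - m) / (B - A) * Real.exp (t * (A - m)) + (m - A) / (B - A) * Real.exp (t * (B - m)) := by
    rw [mgf]
    refine le_trans (integral_mono_ae hintL hintR hconv) (le_of_eq ?_)
    rw [integral_add int1 int2, integral_mul_const, integral_mul_const,
      integral_div, integral_div, integral_sub (integrable_const B) hint,
      integral_sub hint (integrable_const A)]
    simp [hm]
  -- analytic bound
  have hfinal : (B - m) / (B - A) * Real.exp (t * (A - m)) + (m - A) / (B - A) * Real.exp (t * (B - m))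
      ≤ Real.exp (t ^ 2 * (B - A) ^ 2 / 4) := by
    set h : ℝ := t * (B - A) with hh
    have e1 : t * (A - m) = -(p * h) := by
      rw [hp, hh]; field_simp; ring
    have e2 : t * (B - m) = (1 - p) * h := by
      rw [hp, hh]; field_simp; ring
    have e3 : (B - m) / (B - A) = 1 - p := by rw [hp]; field_simp; ring
    have e4 : (m - A) / (B - A) = p := rfl
    rw [e1, e2, e3, e4]
    have hD := Dpos hp0 hp1 h
    have hlog := core_log_ineq hp0 hp1 h
    have : 1 - p + p * Real.exp h ≤ Real.exp (p * h + h ^ 2 / 4) :=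
      (Real.log_le_iff_le_exp hD).1 hlog
    have hcomb : (1 - p) * Real.exp (-(p * h)) + p * Real.exp ((1 - p) * h)
        = Real.exp (-(p * h)) * (1 - p + p * Real.exp h) := by
      have he : Real.exp (-(p * h)) * Real.exp h = Real.exp ((1 - p) * h) := by
        rw [← Real.exp_add]; congr 1; ring
      rw [← he]; ring
    rw [hcomb]
    calc Real.exp (-(p * h)) * (1 - p + p * Real.exp h)
        ≤ Real.exp (-(p * h)) * Real.exp (p * h + h ^ 2 / 4) := by
          exact mul_le_mul_of_nonneg_left this (Real.exp_pos _).le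
      _ = Real.exp (h ^ 2 / 4) := by rw [← Real.exp_add]; congr 1; ring
      _ = Real.exp (t ^ 2 * (B - A) ^ 2 / 4) := by congr 1; rw [hh]; ring
  exact hstep.trans hfinal

end Aux

section Aux2
variable {Ω : Type*} [MeasurableSpace Ω] {μ : Measure Ω} [IsProbabilityMeasure μ]



lemma tail_upper {ι : Type*} (X : ι → Ω → ℝ) (A B : ι → ℝ)
    (hmeas : ∀ i, Measurable (X i))
    (hindep : iIndepFun X μ)
    (hbdd : ∀ i, ∀ᵐ ω ∂μ, A i ≤ X i ω ∧ X i ω ≤ B i)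
    (hAB : ∀ i, A i < B i) (s : Finset ι)
    (hSig : 0 < ∑ i ∈ s, (B i - A i) ^ 2) {ε δ : ℝ} (hδ0 : 0 < δ)
    (hε : Real.sqrt ((∑ i ∈ s, (B i - A i) ^ 2) * (-Real.log δ)) ≤ ε) :
    (μ {ω | ε ≤ ∑ i ∈ s, X i ω - ∑ i ∈ s, ∫ ω, X i ω ∂μ}).toReal ≤ δ := by
  classical
  set Sig2 : ℝ := ∑ i ∈ s, (B i - A i) ^ 2 with hSig2def
  have hε0 : 0 ≤ ε := le_trans (Real.sqrt_nonneg _) hε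
  set t : ℝ := 2 * ε / Sig2 with ht
  have ht0 : 0 ≤ t := by positivity
  set Y : ι → Ω → ℝ := fun i ω => X i ω - ∫ ω, X i ω ∂μ with hY
  have hYmeas : ∀ i, Measurable (Y i) := fun i => (hmeas i).sub measurable_const
  have hYindep : iIndepFun Y μ := by
    have := hindep.comp (fun i y => y - ∫ ω, X i ω ∂μ)
      (fun i => measurable_id.sub measurable_const)
    exact this
  have hYbdd : ∀ i, ∀ᵐ ω ∂μ, A i - ∫ ω, X i ω ∂μ ≤ Y i ω ∧
      Y i ω ≤ B i - ∫ ω, X i ω ∂μ := fun i => by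
    filter_upwards [hbdd i] with ω h using ⟨by simp [hY]; linarith [h.1], by simp [hY]; linarith [h.2]⟩
  have hYint : ∀ i ∈ s, Integrable (fun ω => Real.exp (t * Y i ω)) μ := by
    intro i _
    refine integrable_of_ae_bdd (by fun_prop) (C := Real.exp (|t| *
      (|A i - ∫ ω, X i ω ∂μ| + |B i - ∫ ω, X i ω ∂μ|))) ?_
    filter_upwards [hYbdd i] with ω ⟨h1, h2⟩
    rw [abs_of_pos (Real.exp_pos _), Real.exp_le_exp]
    have habs : |Y i ω| ≤ |A i - ∫ ω, X i ω ∂μ| + |B i - ∫ ω, X i ω ∂μ| := by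
      rcases le_max_iff.1 (abs_le_max_abs_abs h1 h2) with h3 | h3
      · linarith [abs_nonneg (B i - ∫ ω, X i ω ∂μ)]
      · linarith [abs_nonneg (A i - ∫ ω, X i ω ∂μ)]
    calc t * Y i ω ≤ |t * Y i ω| := le_abs_self _
      _ = |t| * |Y i ω| := abs_mul _ _
      _ ≤ _ := mul_le_mul_of_nonneg_left habs (abs_nonneg t)
  have hsetEq : {ω | ε ≤ ∑ i ∈ s, X i ω - ∑ i ∈ s, ∫ ω, X i ω ∂μ}
      = {ω | ε ≤ (∑ i ∈ s, Y i) ω} := by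
    ext ω
    simp only [Set.mem_setOf_eq, Finset.sum_apply, hY, Finset.sum_sub_distrib]
  rw [hsetEq]
  have hchern := measure_ge_le_exp_mul_mgf (μ := μ) (X := ∑ i ∈ s, Y i) ε ht0
    (hindep.comp (fun i y => y - ∫ ω, X i ω ∂μ)
      (fun i => measurable_id.sub measurable_const) |>.integrable_exp_mul_sum hYmeas hYint)
  refine hchern.trans ?_
  have hmgf : mgf (∑ i ∈ s, Y i) μ t ≤ Real.exp (t ^ 2 * Sig2 / 4) := by
    rw [hYindep.mgf_sum hYmeas]
    have hprod : ∏ i ∈ s, mgf (Y i) μ t ≤ ∏ i ∈ s, Real.exp (t ^ 2 * (B i - A i) ^ 2 / 4) := by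
      refine Finset.prod_le_prod (fun i _ => mgf_nonneg) (fun i _ => ?_)
      exact mgf_centered_le (X i) (hmeas i) (A i) (B i) (hAB i) (hbdd i) t
    refine hprod.trans (le_of_eq ?_)
    rw [← Real.exp_sum]
    congr 1
    rw [hSig2def, Finset.mul_sum, Finset.sum_div]
  calc Real.exp (-t * ε) * mgf (∑ i ∈ s, Y i) μ t
      ≤ Real.exp (-t * ε) * Real.exp (t ^ 2 * Sig2 / 4) :=
        mul_le_mul_of_nonneg_left hmgf (Real.exp_pos _).le
    _ = Real.exp (-t * ε + t ^ 2 * Sig2 / 4) := (Real.exp_add _ _).symm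
    _ = Real.exp (-(ε ^ 2) / Sig2) := by
        congr 1
        rw [ht]
        field_simp
        ring
    _ ≤ δ := by
        have hε2 : Sig2 * (-Real.log δ) ≤ ε ^ 2 := by
          have h1 : (0:ℝ) ≤ Sig2 * (-Real.log δ) ∨ Sig2 * (-Real.log δ) < 0 := le_or_gt _ _
          rcases h1 with h1 | h1
          · calc Sig2 * (-Real.log δ) = Real.sqrt (Sig2 * (-Real.log δ)) ^ 2 :=
                (Real.sq_sqrt h1).symm
              _ ≤ ε ^ 2 := by
                have := pow_le_pow_left₀ (Real.sqrt_nonneg _) hε 2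
                exact this
          · nlinarith [sq_nonneg ε]
        have hlog : -(ε ^ 2) / Sig2 ≤ Real.log δ := by
          rw [div_le_iff₀ hSig]
          nlinarith
        calc Real.exp (-(ε ^ 2) / Sig2) ≤ Real.exp (Real.log δ) := Real.exp_le_exp.2 hlog
          _ = δ := Real.exp_log hδ0

lemma tail_lower {ι : Type*} (X : ι → Ω → ℝ) (A B : ι → ℝ)
    (hmeas : ∀ i, Measurable (X i))
    (hindep : iIndepFun X μ)
    (hbdd : ∀ i, ∀ᵐ ω ∂μ, A i ≤ X i ω ∧ X i ω ≤ B i)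
    (hAB : ∀ i, A i < B i) (s : Finset ι)
    (hSig : 0 < ∑ i ∈ s, (B i - A i) ^ 2) {ε δ : ℝ} (hδ0 : 0 < δ)
    (hε : Real.sqrt ((∑ i ∈ s, (B i - A i) ^ 2) * (-Real.log δ)) ≤ ε) :
    (μ {ω | ∑ i ∈ s, X i ω - ∑ i ∈ s, ∫ ω, X i ω ∂μ ≤ -ε}).toReal ≤ δ := by
  have esum : (∑ i ∈ s, ((fun i => -A i) i - (fun i => -B i) i) ^ 2)
      = ∑ i ∈ s, (B i - A i) ^ 2 := Finset.sum_congr rfl (fun i _ => by ring)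
  have key := tail_upper (μ := μ) (fun i ω => -X i ω) (fun i => -B i) (fun i => -A i)
    (fun i => (hmeas i).neg)
    (hindep.comp (fun i y => -y) (fun i => measurable_neg))
    (fun i => by filter_upwards [hbdd i] with ω h using ⟨by simpa using h.2, by simpa using h.1⟩)
    (fun i => by simpa using neg_lt_neg (hAB i)) s
    (by rw [esum]; exact hSig) (ε := ε) (δ := δ) hδ0 (by rw [esum]; exact hε)
  have hset : {ω | ∑ i ∈ s, X i ω - ∑ i ∈ s, ∫ ω, X i ω ∂μ ≤ -ε}
      = {ω | ε ≤ ∑ i ∈ s, (fun i ω => -X i ω) i ω - ∑ i ∈ s, ∫ ω, (fun i ω => -X i ω) i ω ∂μ} := by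
    ext ω
    simp only [Set.mem_setOf_eq, integral_neg, Finset.sum_neg_distrib]
    constructor <;> intro h <;> linarith
  rw [hset]
  exact key

end Aux2




lemma compl_bound {Ω : Type*} [MeasurableSpace Ω] (μ : Measure Ω) [IsProbabilityMeasure μ]
    {E A B : Set Ω} (hE : MeasurableSet E) (h : Eᶜ ⊆ A ∪ B) {δ1 δ2 : ℝ}
    (hA : (μ A).toReal ≤ δ1) (hB : (μ B).toReal ≤ δ2) : 1 - (δ1 + δ2) ≤ (μ E).toReal := by
  have h1 : (μ Eᶜ).toReal ≤ δ1 + δ2 := by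
    have hm : μ Eᶜ ≤ μ A + μ B := (measure_mono h).trans (measure_union_le A B)
    have h2 := ENNReal.toReal_mono
      (ENNReal.add_ne_top.2 ⟨measure_ne_top μ A, measure_ne_top μ B⟩) hm
    rw [ENNReal.toReal_add (measure_ne_top μ A) (measure_ne_top μ B)] at h2
    linarith
  have h2 : (μ Eᶜ).toReal = 1 - (μ E).toReal := by
    rw [prob_compl_eq_one_sub hE,
      ENNReal.toReal_sub_of_le prob_le_one ENNReal.one_ne_top, ENNReal.toReal_one]
  linarith

lemma prob_interval {Ω : Type*} [MeasurableSpace Ω] (μ : Measure Ω) [IsProbabilityMeasure μ]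
    {ι : Type*} (X : ι → Ω → ℝ) (A B : ι → ℝ)
    (hmeas : ∀ i, Measurable (X i))
    (hindep : iIndepFun X μ)
    (hbdd : ∀ i, ∀ᵐ ω ∂μ, A i ≤ X i ω ∧ X i ω ≤ B i)
    (hAB : ∀ i, A i < B i) (s : Finset ι)
    (hSig : 0 < ∑ i ∈ s, (B i - A i) ^ 2)
    (κ C lo hi : ℝ) (hκ : 0 < κ) {δ1 δ2 : ℝ} (hδ1 : 0 < δ1) (hδ2 : 0 < δ2)
    (h1 : lo - C - κ * (∑ i ∈ s, ∫ ω, X i ω ∂μ)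
      + Real.sqrt (κ ^ 2 * (∑ i ∈ s, (B i - A i) ^ 2) * (-Real.log δ1)) ≤ 0)
    (h2 : C + κ * (∑ i ∈ s, ∫ ω, X i ω ∂μ) - hi
      + Real.sqrt (κ ^ 2 * (∑ i ∈ s, (B i - A i) ^ 2) * (-Real.log δ2)) ≤ 0) :
    1 - (δ1 + δ2) ≤
      (μ {ω | lo ≤ C + κ * ∑ i ∈ s, X i ω ∧ C + κ * ∑ i ∈ s, X i ω ≤ hi}).toReal := by
  classical
  set Sig : ℝ := ∑ i ∈ s, (B i - A i) ^ 2 with hSigdef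
  set M : ℝ := ∑ i ∈ s, ∫ ω, X i ω ∂μ with hMdef
  have hsqrt : ∀ z : ℝ, Real.sqrt (κ ^ 2 * Sig * z) = κ * Real.sqrt (Sig * z) := by
    intro z
    rw [mul_assoc, Real.sqrt_mul (sq_nonneg κ), Real.sqrt_sq hκ.le]
  set ε₁ : ℝ := (C + κ * M - lo) / κ with hε₁def
  set ε₂ : ℝ := (hi - C - κ * M) / κ with hε₂def
  have hκε₁ : κ * ε₁ = C + κ * M - lo := by
    rw [hε₁def]; field_simp
  have hκε₂ : κ * ε₂ = hi - C - κ * M := by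
    rw [hε₂def]; field_simp
  have hb1 : Real.sqrt (Sig * (-Real.log δ1)) ≤ ε₁ := by
    rw [hsqrt] at h1
    rw [hε₁def, le_div_iff₀ hκ]
    nlinarith [Real.sqrt_nonneg (Sig * (-Real.log δ1))]
  have hb2 : Real.sqrt (Sig * (-Real.log δ2)) ≤ ε₂ := by
    rw [hsqrt] at h2
    rw [hε₂def, le_div_iff₀ hκ]
    nlinarith [Real.sqrt_nonneg (Sig * (-Real.log δ2))]
  have key1 := tail_lower (μ := μ) X A B hmeas hindep hbdd hAB s hSig hδ1 hb1
  have key2 := tail_upper (μ := μ) X A B hmeas hindep hbdd hAB s hSig hδ2 hb2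
  have hSmeas : Measurable (fun ω => ∑ i ∈ s, X i ω) :=
    Finset.measurable_sum s (fun i _ => hmeas i)
  have hE : MeasurableSet {ω | lo ≤ C + κ * ∑ i ∈ s, X i ω ∧ C + κ * ∑ i ∈ s, X i ω ≤ hi} := by
    exact (measurableSet_le measurable_const ((hSmeas.const_mul κ).const_add C)).inter
      (measurableSet_le ((hSmeas.const_mul κ).const_add C) measurable_const)
  refine compl_bound μ hE ?_ key1 key2
  intro ω hω
  simp only [Set.mem_compl_iff, Set.mem_setOf_eq, not_and, not_le] at hω
  by_cases hlo : lo ≤ C + κ * ∑ i ∈ s, X i ω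
  · right
    have hhi := hω hlo
    simp only [Set.mem_setOf_eq]
    nlinarith [hκ]
  · left
    push_neg at hlo
    simp only [Set.mem_setOf_eq]
    nlinarith [hκ]

lemma sum_filter_fin {M : Type*} [AddCommMonoid M] {τ t : ℕ} (ht : t ≤ τ) (F : ℕ → M) :
    ∑ i ∈ Finset.univ.filter (fun i : Fin τ => (i : ℕ) < t), F (i : ℕ)
      = ∑ k ∈ Finset.range t, F k := by
  rw [Finset.sum_filter, Fin.sum_univ_eq_sum_range (fun k => if k < t then F k else 0)]
  rw [← Finset.sum_subset (Finset.range_subset_range.2 ht)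
    (fun x _ hx => if_neg (by simpa using hx))]
  exact Finset.sum_congr rfl (fun k hk => if_pos (Finset.mem_range.1 hk))

end HoeffdingAux

open HoeffdingAux

/-- The paper's main under-approximation result (Contribution 2, with ν = 1):
if all the deterministic inequalities of the static game `G'` hold, then all the
chance constraints of the original stochastic dynamic game `G` hold, namely the
state-of-charge constraints `ℙ(x̲ ≤ x_t ≤ x̄) ≥ 1 − δ_x` for `t ∈ {1,…,τ}`, the
terminal constraint `ℙ(|x_τ − r| ≤ ε) ≥ 1 − δ_f`, and the power-exchange
constraints `ℙ(0 ≤ g_t ≤ ḡ) ≥ 1 − δ_g` for `t ∈ {0,…,τ−1}`. -/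
theorem feasible_set_under_approximation
    {Ω : Type*} [MeasurableSpace Ω] (μ : Measure Ω) [IsProbabilityMeasure μ]
    (τ N : ℕ) (hτ : 1 ≤ τ) (hN : 1 ≤ N)
    -- renewable generation
    (r : ℕ → Ω → ℝ) (a b : ℕ → ℝ)
    (hrmeas : ∀ k < τ, Measurable (r k))
    (hrindep : iIndepFun (fun k : Fin τ => r k.val) μ)
    (hrbdd : ∀ k < τ, ∀ᵐ ω ∂μ, a k ≤ r k ω ∧ r k ω ≤ b k)
    (hab : ∀ k < τ, a k < b k)
    -- demands: `d j t` is the demand of agent `j` at time `t`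
    (d : ℕ → ℕ → Ω → ℝ) (c f : ℕ → ℕ → ℝ)
    (hdmeas : ∀ j < N, ∀ t < τ, Measurable (d j t))
    (hdindep : ∀ t < τ, iIndepFun (fun j : Fin N => d j.val t) μ)
    (hdbdd : ∀ j < N, ∀ t < τ, ∀ᵐ ω ∂μ, c j t ≤ d j t ω ∧ d j t ω ≤ f j t)
    (hcf : ∀ j < N, ∀ t < τ, c j t < f j t)
    -- decisions and constants
    (u : ℕ → ℕ → ℝ) (ρ x₀ xlo xhi rtar ε gbar : ℝ)
    (δx δtx δf δtf δg δtg : ℝ)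
    (hρ : 0 < ρ) (hx_bounds : xlo < xhi) (hε : 0 < ε) (hgbar : 0 < gbar)
    (hδtx0 : 0 < δtx) (hδtx1 : δtx ≤ 1) (hδx0 : 0 < δx - δtx) (hδx1 : δx - δtx ≤ 1)
    (hδtf0 : 0 < δtf) (hδtf1 : δtf ≤ 1) (hδf0 : 0 < δf - δtf) (hδf1 : δf - δtf ≤ 1)
    (hδtg0 : 0 < δtg) (hδtg1 : δtg ≤ 1) (hδg0 : 0 < δg - δtg) (hδg1 : δg - δtg ≤ 1)
    -- state of charge and power exchange
    (x : ℕ → Ω → ℝ)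
    (hx : ∀ t, ∀ ω, x t ω = x₀ + ∑ k ∈ range t, ρ * (r k ω - ∑ j ∈ range N, u j k))
    (g : ℕ → Ω → ℝ)
    (hg : ∀ t, ∀ ω, g t ω = ∑ j ∈ range N, d j t ω - ∑ j ∈ range N, u j t)
    -- deterministic inequalities on the state of charge, for each t ∈ {1,…,τ}
    (hineq_x₁ : ∀ t, 1 ≤ t → t ≤ τ →
        xlo - x₀ - ρ * (∑ k ∈ range t, ∫ ω, r k ω ∂μ)
        + ρ * (∑ k ∈ range t, ∑ j ∈ range N, u j k)
        + Real.sqrt (-(ρ ^ 2) * (∑ k ∈ range t, (b k - a k) ^ 2) * Real.log δtx) ≤ 0)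
    (hineq_x₂ : ∀ t, 1 ≤ t → t ≤ τ →
        x₀ - xhi + ρ * (∑ k ∈ range t, ∫ ω, r k ω ∂μ)
        - ρ * (∑ k ∈ range t, ∑ j ∈ range N, u j k)
        + Real.sqrt (-(ρ ^ 2) * (∑ k ∈ range t, (b k - a k) ^ 2) * Real.log (δx - δtx)) ≤ 0)
    -- deterministic inequalities on the final state of charge
    (hineq_f₁ : rtar - ε - x₀ - ρ * (∑ k ∈ range τ, ∫ ω, r k ω ∂μ)
        + ρ * (∑ k ∈ range τ, ∑ j ∈ range N, u j k)
        + Real.sqrt (-(ρ ^ 2) * (∑ k ∈ range τ, (b k - a k) ^ 2) * Real.log δtf) ≤ 0)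
    (hineq_f₂ : x₀ - rtar - ε + ρ * (∑ k ∈ range τ, ∫ ω, r k ω ∂μ)
        - ρ * (∑ k ∈ range τ, ∑ j ∈ range N, u j k)
        + Real.sqrt (-(ρ ^ 2) * (∑ k ∈ range τ, (b k - a k) ^ 2) * Real.log (δf - δtf)) ≤ 0)
    -- deterministic inequalities on the power exchange, for each t ∈ {0,…,τ−1}
    (hineq_g₁ : ∀ t < τ,
        ∑ j ∈ range N, u j t - ∑ j ∈ range N, ∫ ω, d j t ω ∂μ
        + Real.sqrt (-(∑ j ∈ range N, (f j t - c j t) ^ 2) * Real.log δtg) ≤ 0)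
    (hineq_g₂ : ∀ t < τ,
        -gbar + ∑ j ∈ range N, ∫ ω, d j t ω ∂μ - ∑ j ∈ range N, u j t
        + Real.sqrt (-(∑ j ∈ range N, (f j t - c j t) ^ 2) * Real.log (δg - δtg)) ≤ 0) :
    (∀ t, 1 ≤ t → t ≤ τ → 1 - δx ≤ (μ {ω | xlo ≤ x t ω ∧ x t ω ≤ xhi}).toReal) ∧
    (1 - δf ≤ (μ {ω | |x τ ω - rtar| ≤ ε}).toReal) ∧
    (∀ t < τ, 1 - δg ≤ (μ {ω | 0 ≤ g t ω ∧ g t ω ≤ gbar}).toReal) := by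
  classical
  -- common state-of-charge machinery, for 1 ≤ t ≤ τ and bounds lo hi and levels δ1 δ2
  have state_key : ∀ t, 1 ≤ t → t ≤ τ → ∀ lo hi δ1 δ2 : ℝ, 0 < δ1 → 0 < δ2 →
      (lo - x₀ - ρ * (∑ k ∈ range t, ∫ ω, r k ω ∂μ)
        + ρ * (∑ k ∈ range t, ∑ j ∈ range N, u j k)
        + Real.sqrt (-(ρ ^ 2) * (∑ k ∈ range t, (b k - a k) ^ 2) * Real.log δ1) ≤ 0) →
      (x₀ - hi + ρ * (∑ k ∈ range t, ∫ ω, r k ω ∂μ)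
        - ρ * (∑ k ∈ range t, ∑ j ∈ range N, u j k)
        + Real.sqrt (-(ρ ^ 2) * (∑ k ∈ range t, (b k - a k) ^ 2) * Real.log δ2) ≤ 0) →
      1 - (δ1 + δ2) ≤ (μ {ω | lo ≤ x t ω ∧ x t ω ≤ hi}).toReal := by
    intro t h1t htτ lo hi δ1 δ2 hδ1 hδ2 hin1 hin2
    set s : Finset (Fin τ) := Finset.univ.filter (fun i : Fin τ => (i : ℕ) < t) with hs
    set U : ℝ := ∑ k ∈ range t, ∑ j ∈ range N, u j k with hU
    have e1 : ∀ ω, (∑ i ∈ s, r (i : ℕ) ω) = ∑ k ∈ range t, r k ω :=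
      fun ω => sum_filter_fin htτ (fun k => r k ω)
    have e2 : (∑ i ∈ s, ∫ ω, r (i : ℕ) ω ∂μ) = ∑ k ∈ range t, ∫ ω, r k ω ∂μ :=
      sum_filter_fin htτ (fun k => ∫ ω, r k ω ∂μ)
    have e3 : (∑ i ∈ s, (b (i : ℕ) - a (i : ℕ)) ^ 2) = ∑ k ∈ range t, (b k - a k) ^ 2 :=
      sum_filter_fin htτ (fun k => (b k - a k) ^ 2)
    have hSigr : 0 < ∑ k ∈ range t, (b k - a k) ^ 2 := by
      refine Finset.sum_pos' (fun k _ => sq_nonneg _) ⟨0, Finset.mem_range.2 h1t, ?_⟩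
      exact pow_pos (sub_pos.2 (hab 0 (lt_of_lt_of_le h1t htτ))) 2
    have hSigf : 0 < ∑ i ∈ s, (b (i : ℕ) - a (i : ℕ)) ^ 2 := by rw [e3]; exact hSigr
    have h1' : lo - (x₀ - ρ * U) - ρ * (∑ i ∈ s, ∫ ω, r (i : ℕ) ω ∂μ)
        + Real.sqrt (ρ ^ 2 * (∑ i ∈ s, (b (i : ℕ) - a (i : ℕ)) ^ 2) * (-Real.log δ1)) ≤ 0 := by
      rw [e2, e3, show ρ ^ 2 * (∑ k ∈ range t, (b k - a k) ^ 2) * (-Real.log δ1)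
        = -(ρ ^ 2) * (∑ k ∈ range t, (b k - a k) ^ 2) * Real.log δ1 from by ring]
      linarith [hin1]
    have h2' : (x₀ - ρ * U) + ρ * (∑ i ∈ s, ∫ ω, r (i : ℕ) ω ∂μ) - hi
        + Real.sqrt (ρ ^ 2 * (∑ i ∈ s, (b (i : ℕ) - a (i : ℕ)) ^ 2) * (-Real.log δ2)) ≤ 0 := by
      rw [e2, e3, show ρ ^ 2 * (∑ k ∈ range t, (b k - a k) ^ 2) * (-Real.log δ2)
        = -(ρ ^ 2) * (∑ k ∈ range t, (b k - a k) ^ 2) * Real.log δ2 from by ring]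
      linarith [hin2]
    have key : 1 - (δ1 + δ2) ≤ (μ {ω | lo ≤ (x₀ - ρ * U) + ρ * ∑ i ∈ s, r (i : ℕ) ω ∧
        (x₀ - ρ * U) + ρ * ∑ i ∈ s, r (i : ℕ) ω ≤ hi}).toReal :=
      prob_interval μ (fun i : Fin τ => r (i : ℕ)) (fun i => a (i : ℕ)) (fun i => b (i : ℕ))
        (fun i => hrmeas (i : ℕ) i.isLt) hrindep
        (fun i => hrbdd (i : ℕ) i.isLt) (fun i => hab (i : ℕ) i.isLt) s hSigf
        ρ (x₀ - ρ * U) lo hi hρ hδ1 hδ2 h1' h2'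
    have hxeq : ∀ ω, x t ω = (x₀ - ρ * U) + ρ * ∑ i ∈ s, r (i : ℕ) ω := by
      intro ω
      rw [hx t ω, e1 ω]
      simp only [mul_sub]
      rw [Finset.sum_sub_distrib, ← Finset.mul_sum, ← Finset.mul_sum, hU]
      ring
    have hseteq : {ω | lo ≤ x t ω ∧ x t ω ≤ hi} = {ω | lo ≤ (x₀ - ρ * U) + ρ * ∑ i ∈ s, r (i : ℕ) ω ∧
        (x₀ - ρ * U) + ρ * ∑ i ∈ s, r (i : ℕ) ω ≤ hi} := by
      ext ω
      rw [Set.mem_setOf_eq, Set.mem_setOf_eq, hxeq ω]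
    rw [hseteq]
    exact key
  refine ⟨?_, ?_, ?_⟩
  · intro t h1t htτ
    have := state_key t h1t htτ xlo xhi δtx (δx - δtx) hδtx0 hδx0
      (hineq_x₁ t h1t htτ) (hineq_x₂ t h1t htτ)
    have h : (1:ℝ) - (δtx + (δx - δtx)) = 1 - δx := by ring
    linarith [this]
  · have key := state_key τ hτ le_rfl (rtar - ε) (rtar + ε) δtf (δf - δtf) hδtf0 hδf0
      (by linarith [hineq_f₁]) (by linarith [hineq_f₂])
    have hseteq : {ω | |x τ ω - rtar| ≤ ε} = {ω | rtar - ε ≤ x τ ω ∧ x τ ω ≤ rtar + ε} := by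
      ext ω
      rw [Set.mem_setOf_eq, Set.mem_setOf_eq, abs_le]
      constructor <;> intro h <;> constructor <;> linarith [h.1, h.2]
    rw [hseteq]
    linarith [key]
  · intro t ht
    set U : ℝ := ∑ j ∈ range N, u j t with hU
    set M : ℝ := ∑ j ∈ range N, ∫ ω, d j t ω ∂μ with hM
    have e1 : ∀ ω, (∑ j : Fin N, d (j : ℕ) t ω) = ∑ j ∈ range N, d j t ω :=
      fun ω => Fin.sum_univ_eq_sum_range (fun j => d j t ω) N
    have e2 : (∑ j : Fin N, ∫ ω, d (j : ℕ) t ω ∂μ) = ∑ j ∈ range N, ∫ ω, d j t ω ∂μ :=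
      Fin.sum_univ_eq_sum_range (fun j => ∫ ω, d j t ω ∂μ) N
    have e3 : (∑ j : Fin N, (f (j : ℕ) t - c (j : ℕ) t) ^ 2)
        = ∑ j ∈ range N, (f j t - c j t) ^ 2 :=
      Fin.sum_univ_eq_sum_range (fun j => (f j t - c j t) ^ 2) N
    have hSigr : 0 < ∑ j ∈ range N, (f j t - c j t) ^ 2 := by
      refine Finset.sum_pos' (fun k _ => sq_nonneg _) ⟨0, Finset.mem_range.2 hN, ?_⟩
      exact pow_pos (sub_pos.2 (hcf 0 hN t ht)) 2
    have hSigf : 0 < ∑ j : Fin N, (f (j : ℕ) t - c (j : ℕ) t) ^ 2 := by rw [e3]; exact hSigr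
    have h1' : 0 - (-U) - 1 * (∑ j : Fin N, ∫ ω, d (j : ℕ) t ω ∂μ)
        + Real.sqrt ((1:ℝ) ^ 2 * (∑ j : Fin N, (f (j : ℕ) t - c (j : ℕ) t) ^ 2)
          * (-Real.log δtg)) ≤ 0 := by
      rw [e2, e3, show (1:ℝ) ^ 2 * (∑ j ∈ range N, (f j t - c j t) ^ 2) * (-Real.log δtg)
        = -(∑ j ∈ range N, (f j t - c j t) ^ 2) * Real.log δtg from by ring]
      linarith [hineq_g₁ t ht]
    have h2' : (-U) + 1 * (∑ j : Fin N, ∫ ω, d (j : ℕ) t ω ∂μ) - gbar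
        + Real.sqrt ((1:ℝ) ^ 2 * (∑ j : Fin N, (f (j : ℕ) t - c (j : ℕ) t) ^ 2)
          * (-Real.log (δg - δtg))) ≤ 0 := by
      rw [e2, e3, show (1:ℝ) ^ 2 * (∑ j ∈ range N, (f j t - c j t) ^ 2) * (-Real.log (δg - δtg))
        = -(∑ j ∈ range N, (f j t - c j t) ^ 2) * Real.log (δg - δtg) from by ring]
      linarith [hineq_g₂ t ht]
    have key : 1 - (δtg + (δg - δtg)) ≤ (μ {ω | 0 ≤ (-U) + 1 * ∑ j : Fin N, d (j : ℕ) t ω ∧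
        (-U) + 1 * ∑ j : Fin N, d (j : ℕ) t ω ≤ gbar}).toReal :=
      prob_interval μ (fun j : Fin N => d (j : ℕ) t) (fun j => c (j : ℕ) t)
        (fun j => f (j : ℕ) t)
        (fun j => hdmeas (j : ℕ) j.isLt t ht) (hdindep t ht)
        (fun j => hdbdd (j : ℕ) j.isLt t ht) (fun j => hcf (j : ℕ) j.isLt t ht)
        Finset.univ hSigf 1 (-U) 0 gbar one_pos hδtg0 hδg0 h1' h2'
    have hgeq : ∀ ω, g t ω = (-U) + 1 * ∑ j : Fin N, d (j : ℕ) t ω := by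
      intro ω
      rw [hg t ω, e1 ω, hU]
      ring
    have hseteq : {ω | 0 ≤ g t ω ∧ g t ω ≤ gbar} = {ω | 0 ≤ (-U) + 1 * ∑ j : Fin N, d (j : ℕ) t ω ∧
        (-U) + 1 * ∑ j : Fin N, d (j : ℕ) t ω ≤ gbar} := by
      ext ω
      rw [Set.mem_setOf_eq, Set.mem_setOf_eq, hgeq ω]
    rw [hseteq]
    linarith [key]
end

section
/- Let U ⊆ ℝ^{Nτ} be a nonempty, compact, convex set and let Λ ∈ ℝ^{Nτ}. Then there exists a unique u* ∈ U such that ⟨Γu* + Λ, u − u*⟩ ≥ 0 for all u ∈ U. That is, the variational inequality VI(U, F) with F(u) = Γu + Λ has exactly one solution. -/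
open Kronecker Matrix
open scoped RealInnerProductSpace

/-!
`Γ = (2α + k) I + k (J ⊗ I)` is symmetric positive definite, because the all-ones matrix
`J = 𝟙 𝟙ᵀ` is positive semidefinite. By symmetry, `F u = Γ u + Λ` is the gradient of the
quadratic `½ ⟪Γ u, u⟫ + ⟪Λ, u⟫`, so a minimiser of it over the compact convex set `U`
satisfies the first-order condition, which is exactly the variational inequality.
Positive definiteness makes `F` strictly monotone, and adding the variational inequalities
at two solutions `u, v` gives `⟪F u - F v, u - v⟫ ≤ 0`, so `u = v`.
-/

section VariationalInequality

variable {E : Type*} [NormedAddCommGroup E] [InnerProductSpace ℝ E]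

def IsVISolution (U : Set E) (F : E → E) (u : E) : Prop :=
  u ∈ U ∧ ∀ v ∈ U, 0 ≤ ⟪F u, v - u⟫

theorem IsVISolution.eq_of_strictMonotone {U : Set E} {F : E → E} {u v : E}
    (hF : ∀ x y, x ≠ y → 0 < ⟪F x - F y, x - y⟫)
    (hu : IsVISolution U F u) (hv : IsVISolution U F v) : u = v := by
  by_contra huv
  have hmono := hF u v huv
  have hu_at_v := hu.2 v hv.1
  have hv_at_u := hv.2 u hu.1
  rw [inner_sub_left, ← neg_sub v u, inner_neg_right, inner_neg_right] at hmono
  rw [← neg_sub v u, inner_neg_right] at hv_at_u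
  linarith

theorem IsMinOn.isVISolution {U : Set E} (hU : Convex ℝ U) {g : E → ℝ} {F : E → E} {u : E}
    (hu : u ∈ U) (hmin : IsMinOn g U u) (hg : HasFDerivAt g (innerSL ℝ (F u)) u) :
    IsVISolution U F u :=
  ⟨hu, fun _ hv => hmin.localize.hasFDerivWithinAt_nonneg hg.hasFDerivWithinAt
    (sub_mem_posTangentConeAt_of_segment_subset (hU.segment_subset hu hv))⟩

theorem ContinuousLinearMap.hasFDerivAt_half_inner_self_add_inner (T : E →L[ℝ] E)
    (hT : (T : E →ₗ[ℝ] E).IsSymmetric) (Λ u : E) :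
    HasFDerivAt (fun x => 2⁻¹ * ⟪T x, x⟫ + ⟪Λ, x⟫) (innerSL ℝ (T u + Λ)) u := by
  have hquad : HasFDerivAt (fun x => ⟪T x, x⟫) _ u := T.hasFDerivAt.inner ℝ (hasFDerivAt_id u)
  refine ((hquad.const_mul 2⁻¹).add (innerSL ℝ Λ).hasFDerivAt).congr_fderiv ?_
  ext y
  have hsymm : ⟪T y, u⟫ = ⟪T u, y⟫ := ((hT u y).trans (real_inner_comm _ _)).symm
  simp only [_root_.add_apply, _root_.smul_apply, ContinuousLinearMap.comp_apply,
    ContinuousLinearMap.prod_apply, ContinuousLinearMap.id_apply, fderivInnerCLM_apply, hsymm,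
    smul_eq_mul, coe_innerSL_apply, inner_add_left]
  ring

theorem existsUnique_isVISolution_affine {U : Set E} (hU_ne : U.Nonempty)
    (hU_cpt : IsCompact U) (hU_cvx : Convex ℝ U) (T : E →L[ℝ] E)
    (hT_symm : (T : E →ₗ[ℝ] E).IsSymmetric) (hT_pos : ∀ w ≠ 0, 0 < ⟪T w, w⟫) (Λ : E) :
    ∃! u, IsVISolution U (fun x => T x + Λ) u := by
  have hg : Continuous fun x => 2⁻¹ * ⟪T x, x⟫ + ⟪Λ, x⟫ := by fun_prop
  obtain ⟨u, hu, hmin⟩ := hU_cpt.exists_isMinOn hU_ne hg.continuousOn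
  have hu_sol : IsVISolution U (fun x => T x + Λ) u :=
    hmin.isVISolution hU_cvx hu (T.hasFDerivAt_half_inner_self_add_inner hT_symm Λ u)
  refine ⟨u, hu_sol, fun v hv => hv.eq_of_strictMonotone (fun x y hxy => ?_) hu_sol⟩
  simpa [← map_sub] using hT_pos (x - y) (sub_ne_zero.mpr hxy)

end VariationalInequality

namespace Matrix

variable {n m : Type*} [Fintype n] [Fintype m]

theorem posSemidef_allOnes : (of fun _ _ => (1 : ℝ) : Matrix n n ℝ).PosSemidef := by
  convert posSemidef_vecMulVec_self_star (fun _ : n => (1 : ℝ)) using 1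
  ext; simp [vecMulVec]

theorem posDef_smul_one_add_smul_allOnes_kronecker [DecidableEq n] [DecidableEq m] {c k : ℝ}
    (hc : 0 < c) (hk : 0 ≤ k) :
    (c • ((1 : Matrix n n ℝ) ⊗ₖ (1 : Matrix m m ℝ))
      + k • ((of fun _ _ => (1 : ℝ)) ⊗ₖ (1 : Matrix m m ℝ))).PosDef := by
  rw [one_kronecker_one]
  exact (PosDef.one.smul hc).add_posSemidef ((posSemidef_allOnes.kronecker PosSemidef.one).smul hk)

theorem PosDef.inner_toEuclideanCLM_self_pos [DecidableEq n] {A : Matrix n n ℝ} (hA : A.PosDef)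
    {x : EuclideanSpace ℝ n} (hx : x ≠ 0) : 0 < ⟪toEuclideanCLM (𝕜 := ℝ) A x, x⟫ := by
  rw [real_inner_comm, inner_toEuclideanCLM]
  simpa using hA.dotProduct_mulVec_pos (x := WithLp.ofLp x) (by simpa using hx)

end Matrix

theorem variational_GNE_exists_unique_general
    (N τ : ℕ) (α k : ℝ) (hα : 0 < α) (hk : 0 < k)
    (Γ : Matrix (Fin N × Fin τ) (Fin N × Fin τ) ℝ)
    (hΓ : Γ = (2 * α + k) • ((1 : Matrix (Fin N) (Fin N) ℝ) ⊗ₖ (1 : Matrix (Fin τ) (Fin τ) ℝ))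
        + k • ((Matrix.of fun _ _ => (1 : ℝ)) ⊗ₖ (1 : Matrix (Fin τ) (Fin τ) ℝ)))
    (U : Set (EuclideanSpace ℝ (Fin N × Fin τ)))
    (hU_ne : U.Nonempty) (hU_cpt : IsCompact U) (hU_cvx : Convex ℝ U)
    (Λ : EuclideanSpace ℝ (Fin N × Fin τ)) :
    ∃! ustar : EuclideanSpace ℝ (Fin N × Fin τ), ustar ∈ U ∧
      ∀ u ∈ U, 0 ≤ ⟪Matrix.toEuclideanLin Γ ustar + Λ, u - ustar⟫ := by
  have hΓ_pos : Γ.PosDef :=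
    hΓ ▸ posDef_smul_one_add_smul_allOnes_kronecker (by positivity) hk.le
  exact existsUnique_isVISolution_affine hU_ne hU_cpt hU_cvx (toEuclideanCLM (𝕜 := ℝ) Γ)
    (isSymmetric_toEuclideanLin_iff.mpr hΓ_pos.isHermitian)
    (fun _ hw => hΓ_pos.inner_toEuclideanCLM_self_pos hw) Λ

/-- Proposition 5 of the paper: for `Γ = (2α+k)·(I_N ⊗ I_τ) + k·(1_{N×N} ⊗ I_τ)` and any
nonempty, compact, convex set `U` of collective strategies, the variational inequality
`VI(U, F)` with `F(u) = Γu + Λ` has exactly one solution, i.e. the variational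
generalized Nash equilibrium exists and is unique. -/
theorem variational_GNE_exists_unique
    (N τ : ℕ) (hN : 1 ≤ N) (hτ : 1 ≤ τ) (α k : ℝ) (hα : 0 < α) (hk : 0 < k)
    (Γ : Matrix (Fin N × Fin τ) (Fin N × Fin τ) ℝ)
    (hΓ : Γ = (2 * α + k) • ((1 : Matrix (Fin N) (Fin N) ℝ) ⊗ₖ (1 : Matrix (Fin τ) (Fin τ) ℝ))
        + k • ((Matrix.of fun _ _ => (1 : ℝ)) ⊗ₖ (1 : Matrix (Fin τ) (Fin τ) ℝ)))
    (U : Set (EuclideanSpace ℝ (Fin N × Fin τ)))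
    (hU_ne : U.Nonempty) (hU_cpt : IsCompact U) (hU_cvx : Convex ℝ U)
    (Λ : EuclideanSpace ℝ (Fin N × Fin τ)) :
    ∃! ustar : EuclideanSpace ℝ (Fin N × Fin τ), ustar ∈ U ∧
      ∀ u ∈ U, 0 ≤ ⟪Matrix.toEuclideanLin Γ ustar + Λ, u - ustar⟫ :=
  variational_GNE_exists_unique_general N τ α k hα hk Γ hΓ U hU_ne hU_cpt hU_cvx Λ
end
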